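/- arXiv:1701.07221 — 9 statements merged into one kernel-verified Lean document; each statement's English description precedes it below -/
import Mathlib

section
/- Let E₀ be a finite set of edges on V, let C_1, …, C_ℓ ⊆ V be communities with ℓ ≥ 1 and density thresholds α_1, …, α_ℓ ∈ [0,1], and suppose Φ(E₀) = 0. Let OPT be the minimum cardinality of a subset E' ⊆ E₀ with Φ(E') = 0. Suppose e_1, …, e_T ∈ E₀ are distinct edges such that, setting E_t = {e_1, …, e_t} (with E_0 = ∅), for every t ∈ {1,…,T} the edge e_t maximizes Φ(E_{t−1} ∪ {e}) over all e ∈ E₀ \ E_{t−1}, and moreover Φ(E_t) < 0 for all t < T while Φ(E_T) = 0. Then T ≤ (1 + ln ℓ)·OPT. -/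
open scoped Classical

/-- The density potential `Φ(H, C) = min(0, |H(C)| − ⌈α·binom(|C|,2)⌉)`. -/
noncomputable def densityPotential {V : Type*} (C : Finset V) (α : ℝ)
    (H : Finset (Sym2 V)) : ℤ :=
  min 0 (((H.filter (fun e => ∀ v ∈ e, v ∈ C)).card : ℤ) - ⌈α * (C.card.choose 2 : ℝ)⌉)

/-- The total potential `Φ(H) = Σ_{i=1}^{ℓ} Φ(H, C_i)`. -/
noncomputable def totalPotential {V : Type*} {ℓ : ℕ} (C : Fin ℓ → Finset V)
    (α : Fin ℓ → ℝ) (H : Finset (Sym2 V)) : ℤ :=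
  ∑ i : Fin ℓ, densityPotential (C i) (α i) H

/-!
The deficit `D(H) = -Φ(H)` is a nonnegative integer, and `Φ` is monotone and submodular, being a
sum of concave functions of edge counts. If `E'` is an optimal solution, then `Φ(E_t ∪ E') = 0`,
so by submodularity one of the `OPT` edges of `E'` raises `Φ(E_t)` by at least `D(E_t) / OPT`;
the greedy edge does at least as well, whence `D(E_{t+1}) ≤ (1 - 1/OPT) D(E_t)`. Since each edge
raises `Φ` by at most `ℓ`, `D(∅) ≤ ℓ·OPT`, so `D(E_t) ≤ e^{-t/OPT} ℓ·OPT`. On the other hand the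
deficits strictly decrease along the run and are positive until step `T`, so `D(E_{T-OPT}) ≥ OPT`.
Comparing the two bounds at `t = T - OPT` gives `T - OPT ≤ OPT·ln ℓ`.
-/

open Finset

section DiminishingReturns

variable {α β : Type*} [DecidableEq α] [AddCommGroup β] [PartialOrder β]

def HasDiminishingReturns (Φ : Finset α → β) : Prop :=
  ∀ ⦃A B : Finset α⦄, A ⊆ B → ∀ f, Φ (insert f B) - Φ B ≤ Φ (insert f A) - Φ A

variable [IsOrderedAddMonoid β]

theorem HasDiminishingReturns.sum {ι : Type*} (s : Finset ι) {Φ : ι → Finset α → β}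
    (hΦ : ∀ i ∈ s, HasDiminishingReturns (Φ i)) :
    HasDiminishingReturns fun H => ∑ i ∈ s, Φ i H := by
  intro A B hAB f
  simp only [← sum_sub_distrib]
  exact sum_le_sum fun i hi => hΦ i hi hAB f

theorem HasDiminishingReturns.sub_le_sum {Φ : Finset α → β} (hΦ : HasDiminishingReturns Φ)
    (A S : Finset α) : Φ (A ∪ S) - Φ A ≤ ∑ f ∈ S, (Φ (insert f A) - Φ A) := by
  induction S using Finset.induction_on with
  | empty => simp
  | insert f S hf ih =>
    rw [union_insert, sum_insert hf]
    calc Φ (insert f (A ∪ S)) - Φ A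
        = (Φ (insert f (A ∪ S)) - Φ (A ∪ S)) + (Φ (A ∪ S) - Φ A) := by abel
      _ ≤ (Φ (insert f A) - Φ A) + ∑ f ∈ S, (Φ (insert f A) - Φ A) :=
        add_le_add (hΦ subset_union_left f) ih

theorem HasDiminishingReturns.neg_le_card_smul_gain {Φ : Finset α → β} (hmono : Monotone Φ)
    (hΦ : HasDiminishingReturns Φ) {A E' : Finset α} (hE' : Φ (A ∪ E') = 0) {e : α}
    (hbest : ∀ f ∈ E' \ A, Φ (insert f A) ≤ Φ (insert e A)) :
    -Φ A ≤ #E' • (Φ (insert e A) - Φ A) := by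
  have hbest' : ∀ f ∈ E', Φ (insert f A) ≤ Φ (insert e A) := fun f hf => by
    by_cases hfA : f ∈ A
    · rw [insert_eq_of_mem hfA]
      exact hmono (subset_insert e A)
    · exact hbest f (mem_sdiff.2 ⟨hf, hfA⟩)
  calc -Φ A = Φ (A ∪ E') - Φ A := by rw [hE', zero_sub]
    _ ≤ ∑ f ∈ E', (Φ (insert f A) - Φ A) := hΦ.sub_le_sum A E'
    _ ≤ ∑ _f ∈ E', (Φ (insert e A) - Φ A) :=
      sum_le_sum fun f hf => sub_le_sub_right (hbest' f hf) _
    _ = #E' • (Φ (insert e A) - Φ A) := sum_const _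

end DiminishingReturns

section Potential

variable {V : Type*}

theorem densityPotential_nonpos (C : Finset V) (α : ℝ) (H : Finset (Sym2 V)) :
    densityPotential C α H ≤ 0 :=
  min_le_left _ _

theorem densityPotential_monotone (C : Finset V) (α : ℝ) :
    Monotone (densityPotential C α) := by
  intro A B hAB
  have := card_le_card (filter_subset_filter (fun e : Sym2 V => ∀ v ∈ e, v ∈ C) hAB)
  unfold densityPotential
  omega

theorem densityPotential_insert_le [DecidableEq V] (C : Finset V) (α : ℝ) (f : Sym2 V)
    (H : Finset (Sym2 V)) :
    densityPotential C α (insert f H) ≤ densityPotential C α H + 1 := by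
  have : #((insert f H).filter fun e => ∀ v ∈ e, v ∈ C) ≤
      #(H.filter fun e => ∀ v ∈ e, v ∈ C) + 1 := by
    rw [filter_insert]
    split_ifs
    exacts [card_insert_le _ _, Nat.le_succ _]
  unfold densityPotential
  omega

theorem hasDiminishingReturns_densityPotential [DecidableEq V] (C : Finset V) (α : ℝ) :
    HasDiminishingReturns (densityPotential C α) := by
  intro A B hAB f
  by_cases hfB : f ∈ B
  · rw [insert_eq_of_mem hfB, sub_self, sub_nonneg]
    exact densityPotential_monotone C α (subset_insert f A)
  have hfA : f ∉ A := fun h => hfB (hAB h)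
  have hcard := card_le_card (filter_subset_filter (fun e : Sym2 V => ∀ v ∈ e, v ∈ C) hAB)
  unfold densityPotential
  rw [filter_insert, filter_insert]
  split_ifs
  · rw [card_insert_of_notMem (fun h => hfA (mem_filter.1 h).1),
      card_insert_of_notMem (fun h => hfB (mem_filter.1 h).1)]
    omega
  · simp

variable {ℓ : ℕ} (C : Fin ℓ → Finset V) (α : Fin ℓ → ℝ)

theorem totalPotential_nonpos (H : Finset (Sym2 V)) : totalPotential C α H ≤ 0 :=
  sum_nonpos fun i _ => densityPotential_nonpos (C i) (α i) H

theorem totalPotential_monotone : Monotone (totalPotential C α) :=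
  fun _ _ hAB => sum_le_sum fun i _ => densityPotential_monotone (C i) (α i) hAB

theorem hasDiminishingReturns_totalPotential [DecidableEq V] :
    HasDiminishingReturns (totalPotential C α) :=
  HasDiminishingReturns.sum univ fun i _ => hasDiminishingReturns_densityPotential (C i) (α i)

theorem totalPotential_sub_empty_le [DecidableEq V] (S : Finset (Sym2 V)) :
    totalPotential C α S - totalPotential C α ∅ ≤ ℓ * #S := by
  have hsingle : ∀ f, totalPotential C α (insert f ∅) - totalPotential C α ∅ ≤ ℓ := fun f => by
    have := sum_le_sum fun i (_ : i ∈ univ) => densityPotential_insert_le (C i) (α i) f ∅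
    simp only [totalPotential, sum_add_distrib, sum_const, card_univ, Fintype.card_fin,
      nsmul_eq_mul, mul_one] at this ⊢
    linarith
  calc totalPotential C α S - totalPotential C α ∅
      ≤ ∑ f ∈ S, (totalPotential C α (insert f ∅) - totalPotential C α ∅) := by
        simpa only [empty_union] using (hasDiminishingReturns_totalPotential C α).sub_le_sum ∅ S
    _ ≤ ∑ _f ∈ S, (ℓ : ℤ) := sum_le_sum fun f _ => hsingle f
    _ = ℓ * #S := by rw [sum_const, nsmul_eq_mul, mul_comm]

end Potential

theorem image_filter_lt_succ {β : Type*} [DecidableEq β] {T : ℕ} (e : Fin T → β) (t : Fin T) :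
    (univ.filter fun j : Fin T => (j : ℕ) < t + 1).image e =
      insert (e t) ((univ.filter fun j : Fin T => (j : ℕ) < t).image e) := by
  rw [← image_insert]
  congr 1
  ext j
  simp only [mem_insert, mem_filter, mem_univ, true_and, Fin.ext_iff]
  omega

theorem add_le_apply_sub_of_lt_succ {D : ℕ → ℤ} {T : ℕ} (hdec : ∀ t < T, D (t + 1) < D t) :
    ∀ j ≤ T, D T + j ≤ D (T - j) := by
  intro j
  induction j with
  | zero => simp
  | succ j ih =>
    intro hj
    have h := hdec (T - (j + 1)) (by omega)
    rw [show T - (j + 1) + 1 = T - j by omega] at h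
    push_cast
    linarith [ih (by omega)]

theorem le_exp_neg_mul_of_le_mul_sub {u : ℕ → ℝ} {k : ℝ} (hk : 1 ≤ k) (hu0 : 0 ≤ u 0) (n : ℕ)
    (h : ∀ t < n, u t ≤ k * (u t - u (t + 1))) : u n ≤ Real.exp (-(n / k)) * u 0 := by
  have hkpos : 0 < k := one_pos.trans_le hk
  have hratio : 0 ≤ 1 - 1 / k := by rwa [sub_nonneg, div_le_one hkpos]
  calc u n ≤ (1 - 1 / k) ^ n * u 0 := le_geom hratio n fun t ht => by
        rw [one_sub_div hkpos.ne', div_mul_eq_mul_div, le_div_iff₀ hkpos]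
        linarith [h t ht]
    _ ≤ Real.exp (-(1 / k)) ^ n * u 0 :=
      mul_le_mul_of_nonneg_right (pow_le_pow_left₀ hratio (Real.one_sub_le_exp_neg _) n) hu0
    _ = Real.exp (-(n / k)) * u 0 := by rw [← Real.exp_nat_mul]; ring_nf

theorem le_one_add_log_mul_of_decay {D : ℕ → ℤ} {T k ℓ : ℕ} (h0 : D 0 ≤ ℓ * k)
    (hstep : ∀ t < T, D t ≤ k * (D t - D (t + 1))) (hpos : ∀ t < T, 0 < D t) (hT : 0 ≤ D T) :
    (T : ℝ) ≤ (1 + Real.log ℓ) * k := by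
  have hlog := Real.log_natCast_nonneg ℓ
  rcases le_or_gt T k with hTk | hkT
  · calc (T : ℝ) ≤ k := by exact_mod_cast hTk
      _ ≤ (1 + Real.log ℓ) * k := le_mul_of_one_le_left (by positivity) (by linarith)
  have hk : 0 < k := Nat.pos_of_ne_zero fun h => by
    have := hstep 0 (by omega)
    simp only [h, Nat.cast_zero, zero_mul] at this
    linarith [hpos 0 (by omega)]
  have hkR : (0 : ℝ) < k := by exact_mod_cast hk
  have hdec : ∀ t < T, D (t + 1) < D t := fun t ht => by
    nlinarith [hstep t ht, hpos t ht]
  set t₀ := T - k with ht₀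
  have hlow : (k : ℝ) ≤ D t₀ := by
    have := add_le_apply_sub_of_lt_succ hdec k hkT.le
    exact_mod_cast (by linarith : (k : ℤ) ≤ D t₀)
  have hup : (D t₀ : ℝ) ≤ Real.exp (-(t₀ / k)) * (ℓ * k) :=
    (le_exp_neg_mul_of_le_mul_sub (u := fun t => (D t : ℝ)) (by exact_mod_cast hk)
      (by exact_mod_cast (hpos 0 (by omega)).le) t₀
      fun t ht => by exact_mod_cast hstep t (by omega)).trans
    (mul_le_mul_of_nonneg_left (by exact_mod_cast h0) (Real.exp_pos _).le)
  have hexp : Real.exp (t₀ / k) ≤ ℓ := by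
    have h := mul_le_mul_of_nonneg_left (hlow.trans hup) (Real.exp_pos (t₀ / k)).le
    rw [← mul_assoc, ← Real.exp_add, add_neg_cancel, Real.exp_zero, one_mul] at h
    exact le_of_mul_le_mul_right h hkR
  have ht₀log := (Real.le_log_iff_exp_le ((Real.exp_pos _).trans_le hexp)).2 hexp
  rw [div_le_iff₀ hkR] at ht₀log
  have : (T : ℝ) = t₀ + k := by rw [ht₀]; push_cast [hkT.le]; ring
  linarith

theorem dgreedy_approximation_general
    {V : Type*} [DecidableEq V]
    (E₀ : Finset (Sym2 V))
    (ℓ : ℕ) (C : Fin ℓ → Finset V) (α : Fin ℓ → ℝ)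
    (OPT : ℕ)
    (hOPT₁ : ∃ E' ⊆ E₀, totalPotential C α E' = 0 ∧ E'.card = OPT)
    (T : ℕ) (e : Fin T → Sym2 V)
    (Eset : ℕ → Finset (Sym2 V))
    (hEset : ∀ n : ℕ, Eset n = (Finset.univ.filter (fun j : Fin T => (j : ℕ) < n)).image e)
    (hgreedy : ∀ t : Fin T, ∀ f ∈ E₀ \ Eset t,
      totalPotential C α (insert f (Eset t)) ≤ totalPotential C α (insert (e t) (Eset t)))
    (hneg : ∀ t : Fin T, totalPotential C α (Eset t) < 0) :
    (T : ℝ) ≤ (1 + Real.log ℓ) * OPT := by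
  obtain ⟨E', hE'E₀, hE'zero, rfl⟩ := hOPT₁
  have hE0 : Eset 0 = ∅ := by simp [hEset]
  have hEsucc (t : Fin T) : Eset (t + 1) = insert (e t) (Eset t) := by
    rw [hEset, hEset, image_filter_lt_succ]
  refine le_one_add_log_mul_of_decay (D := fun n => -totalPotential C α (Eset n)) ?_
    (fun t ht => ?_) (fun t ht => neg_pos.2 (hneg ⟨t, ht⟩))
    (neg_nonneg.2 (totalPotential_nonpos C α _))
  · have := totalPotential_sub_empty_le C α E'
    rw [hE0]
    linarith
  · have hunion : totalPotential C α (Eset t ∪ E') = 0 :=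
      le_antisymm (totalPotential_nonpos C α _)
        (hE'zero ▸ totalPotential_monotone C α subset_union_right)
    have := (hasDiminishingReturns_totalPotential C α).neg_le_card_smul_gain
      (totalPotential_monotone C α) hunion (e := e ⟨t, ht⟩)
      fun f hf => hgreedy ⟨t, ht⟩ f (sdiff_subset_sdiff hE'E₀ subset_rfl hf)
    rw [← hEsucc ⟨t, ht⟩, nsmul_eq_mul] at this
    linarith

/-- The `(1 + ln ℓ)`-approximation guarantee of the `DGreedy` algorithm for the
`SparseDens` problem.  The greedy solution is `E_T = {e_1, …, e_T}` (here the edges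
are indexed by `Fin T`, so `e ⟨t⟩` is the `(t+1)`-st chosen edge, and
`Eset t = {e_1, …, e_t}`); `OPT` is the minimum cardinality of a subset `E' ⊆ E₀`
with `Φ(E') = 0`.  Then `T ≤ (1 + ln ℓ)·OPT`. -/
theorem dgreedy_approximation
    {V : Type*} [Fintype V] [DecidableEq V]
    (E₀ : Finset (Sym2 V)) (hE₀diag : ∀ e ∈ E₀, ¬ e.IsDiag)
    (ℓ : ℕ) (hℓ : 1 ≤ ℓ) (C : Fin ℓ → Finset V) (α : Fin ℓ → ℝ)
    (hα0 : ∀ i, 0 ≤ α i) (hα1 : ∀ i, α i ≤ 1)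
    (hfeas : totalPotential C α E₀ = 0)
    (OPT : ℕ)
    (hOPT₁ : ∃ E' ⊆ E₀, totalPotential C α E' = 0 ∧ E'.card = OPT)
    (hOPT₂ : ∀ E' ⊆ E₀, totalPotential C α E' = 0 → OPT ≤ E'.card)
    (T : ℕ) (e : Fin T → Sym2 V)
    (hdistinct : Function.Injective e)
    (hmem : ∀ t, e t ∈ E₀)
    (Eset : ℕ → Finset (Sym2 V))
    (hEset : ∀ n : ℕ, Eset n = (Finset.univ.filter (fun j : Fin T => (j : ℕ) < n)).image e)
    (hgreedy : ∀ t : Fin T, ∀ f ∈ E₀ \ Eset t,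
      totalPotential C α (insert f (Eset t)) ≤ totalPotential C α (insert (e t) (Eset t)))
    (hneg : ∀ t : Fin T, totalPotential C α (Eset t) < 0)
    (hfinal : totalPotential C α (Eset T) = 0) :
    (T : ℝ) ≤ (1 + Real.log ℓ) * OPT :=
  dgreedy_approximation_general E₀ ℓ C α OPT hOPT₁ T e Eset hEset hgreedy hneg
end

section
/- Let (C_1, …, C_ℓ) be a finite indexed family of nonempty subsets of V. Let I be a matching in the associated hypergraph such that every index i ∈ {1,…,ℓ} belongs to some hyperedge H ∈ I, and for every H ∈ I fix a center c_H ∈ ⋂_{i∈H} C_i. Let D_I = ⋃_{H∈I} {(c_H→x) : x ∈ ⋃_{i∈H} C_i, x ≠ c_H}. Then D_I satisfies the directed-star property for every community C_i, and |D_I| ≤ C_tot − Σ_{H∈I} c(H). -/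
open scoped Classical

/-- An arc set `A` satisfies the directed-star property for `S` if some `c ∈ S`
has an arc `(c→x) ∈ A` to every other element of `S`. -/
def DiStarProp {V : Type*} (A : Finset (V × V)) (S : Finset V) : Prop :=
  ∃ c ∈ S, ∀ x ∈ S, x ≠ c → (c, x) ∈ A

/-- The intersection `⋂_{i∈H} C_i` of the communities indexed by `H`. -/
noncomputable def interC {V : Type*} [Fintype V] {ℓ : ℕ} (C : Fin ℓ → Finset V)
    (H : Finset (Fin ℓ)) : Finset V :=
  Finset.univ.filter (fun v => ∀ i ∈ H, v ∈ C i)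

/-- The union `⋃_{i∈H} C_i` of the communities indexed by `H`. -/
def unionC {V : Type*} [DecidableEq V] {ℓ : ℕ} (C : Fin ℓ → Finset V)
    (H : Finset (Fin ℓ)) : Finset V :=
  H.biUnion C

/-- A hyperedge is a nonempty set of indices whose communities have nonempty
common intersection. -/
def IsHyperedge {V : Type*} [Fintype V] {ℓ : ℕ} (C : Fin ℓ → Finset V)
    (H : Finset (Fin ℓ)) : Prop :=
  H.Nonempty ∧ (interC C H).Nonempty

/-- The score `c(H) = 1 − |H| + Σ_{v ∈ ⋃_{i∈H} C_i} (|{i ∈ H : v ∈ C_i}| − 1)`. -/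
noncomputable def score {V : Type*} [Fintype V] [DecidableEq V] {ℓ : ℕ}
    (C : Fin ℓ → Finset V) (H : Finset (Fin ℓ)) : ℤ :=
  1 - (H.card : ℤ) +
    ∑ v ∈ unionC C H, (((H.filter (fun i => v ∈ C i)).card : ℤ) - 1)

/-- A matching is a set of pairwise disjoint hyperedges. -/
def IsHyperMatching {V : Type*} [Fintype V] {ℓ : ℕ} (C : Fin ℓ → Finset V)
    (I : Finset (Finset (Fin ℓ))) : Prop :=
  (∀ H ∈ I, IsHyperedge C H) ∧ ∀ H ∈ I, ∀ H' ∈ I, H ≠ H' → Disjoint H H'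

/-- If `I` is a matching covering every index and, for `H ∈ I`, `c_H ∈ ⋂_{i∈H} C_i`,
then the arc set `D_I = ⋃_{H∈I} {(c_H→x) : x ∈ ⋃_{i∈H} C_i, x ≠ c_H}` satisfies the
directed-star property for every community, and `|D_I| ≤ C_tot − Σ_{H∈I} c(H)`. -/
theorem matching_to_directed_stars
    {V : Type*} [Fintype V] [DecidableEq V]
    (ℓ : ℕ) (C : Fin ℓ → Finset V) (hC : ∀ i, (C i).Nonempty)
    (I : Finset (Finset (Fin ℓ))) (hI : IsHyperMatching C I)
    (hcover : ∀ i : Fin ℓ, ∃ H ∈ I, i ∈ H)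
    (ctr : Finset (Fin ℓ) → V) (hctr : ∀ H ∈ I, ctr H ∈ interC C H)
    (DI : Finset (V × V))
    (hDI : DI = I.biUnion (fun H => ((unionC C H).erase (ctr H)).image (fun x => (ctr H, x)))) :
    (∀ i, DiStarProp DI (C i)) ∧
    (DI.card : ℤ) ≤ (∑ i : Fin ℓ, ((C i).card - 1 : ℤ)) - ∑ H ∈ I, score C H := by
  obtain ⟨hhe, hdisj⟩ := hI
  -- centers lie in each community of their hyperedge
  have hctrC : ∀ H ∈ I, ∀ i ∈ H, ctr H ∈ C i := by
    intro H hH i hi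
    have := hctr H hH
    simp only [interC, Finset.mem_filter] at this
    exact this.2 i hi
  have hctrU : ∀ H ∈ I, ctr H ∈ unionC C H := by
    intro H hH
    obtain ⟨i, hi⟩ := (hhe H hH).1
    exact Finset.mem_biUnion.2 ⟨i, hi, hctrC H hH i hi⟩
  constructor
  · intro i
    obtain ⟨H, hH, hiH⟩ := hcover i
    refine ⟨ctr H, hctrC H hH i hiH, ?_⟩
    intro x hx hxc
    rw [hDI]
    apply Finset.mem_biUnion.2
    refine ⟨H, hH, Finset.mem_image.2 ⟨x, ?_, rfl⟩⟩
    exact Finset.mem_erase.2 ⟨hxc, Finset.mem_biUnion.2 ⟨i, hiH, hx⟩⟩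
  · -- score rewriting
    have hscore : ∀ H ∈ I, score C H =
        (∑ i ∈ H, ((C i).card - 1 : ℤ)) + 1 - ((unionC C H).card : ℤ) := by
      intro H hH
      have hdouble : ∑ v ∈ unionC C H, ((H.filter (fun i => v ∈ C i)).card : ℤ)
          = ∑ i ∈ H, ((C i).card : ℤ) := by
        have h1 : ∀ v, ((H.filter (fun i => v ∈ C i)).card : ℤ)
            = ∑ i ∈ H, (if v ∈ C i then (1 : ℤ) else 0) := by
          intro v
          rw [Finset.card_filter]
          push_cast
          rfl
        simp only [h1]
        rw [Finset.sum_comm]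
        refine Finset.sum_congr rfl fun i hi => ?_
        have hsub : C i ⊆ unionC C H := fun v hv => Finset.mem_biUnion.2 ⟨i, hi, hv⟩
        rw [Finset.sum_ite_mem, Finset.inter_eq_right.mpr hsub]
        simp
      unfold score
      rw [Finset.sum_sub_distrib, hdouble, Finset.sum_sub_distrib]
      simp [Finset.card_biUnion]
      push_cast
      ring
    have hblock : ∀ H ∈ I,
        (((unionC C H).erase (ctr H)).image (fun x => (ctr H, x))).card
          = (unionC C H).card - 1 := by
      intro H hH
      rw [Finset.card_image_of_injective _ (fun a b h => by simpa using h),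
        Finset.card_erase_of_mem (hctrU H hH)]
    have hcard : (DI.card : ℤ) ≤ ∑ H ∈ I, (((unionC C H).card : ℤ) - 1) := by
      rw [hDI]
      calc ((I.biUnion fun H => ((unionC C H).erase (ctr H)).image (fun x => (ctr H, x))).card : ℤ)
          ≤ (∑ H ∈ I, (((unionC C H).erase (ctr H)).image (fun x => (ctr H, x))).card : ℕ) := by
            exact_mod_cast Finset.card_biUnion_le
        _ = ∑ H ∈ I, (((unionC C H).card : ℤ) - 1) := by
            push_cast
            refine Finset.sum_congr rfl fun H hH => ?_
            rw [hblock H hH]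
            have h1 : 1 ≤ (unionC C H).card := Finset.card_pos.2 ⟨ctr H, hctrU H hH⟩
            push_cast [Nat.cast_sub h1]
            ring
    have hpart : (∑ i : Fin ℓ, ((C i).card - 1 : ℤ))
        = ∑ H ∈ I, ∑ i ∈ H, ((C i).card - 1 : ℤ) := by
      have huniv : (Finset.univ : Finset (Fin ℓ)) = I.biUnion (fun H => H) := by
        ext i
        simp only [Finset.mem_univ, true_iff, Finset.mem_biUnion]
        exact hcover i
      rw [huniv, Finset.sum_biUnion (fun H hH H' hH' hne => hdisj H hH H' hH' hne)]
    rw [Finset.sum_congr rfl hscore, hpart]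
    have heq : ∑ H ∈ I, ∑ i ∈ H, ((C i).card - 1 : ℤ)
        - ∑ H ∈ I, ((∑ i ∈ H, ((C i).card - 1 : ℤ)) + 1 - ((unionC C H).card : ℤ))
        = ∑ H ∈ I, (((unionC C H).card : ℤ) - 1) := by
      rw [← Finset.sum_sub_distrib]
      exact Finset.sum_congr rfl fun H _ => by ring
    rw [heq]
    exact hcard
end

section
/- Let (C_1, …, C_ℓ) be a finite indexed family of nonempty subsets of V, and for each i let T_i = {(μ_i→x) : x ∈ C_i, x ≠ μ_i} be a directed star spanning C_i with center μ_i ∈ C_i. Let D = ⋃_{i=1}^{ℓ} T_i. For each vertex o ∈ V let N_o = {i : μ_i = o}, and let P = {N_o : N_o ≠ ∅}. Then the nonempty groups N_o are hyperedges (they are nonempty index sets with o ∈ ⋂_{i∈N_o} C_i), P is a matching in which every index belongs to some hyperedge, and |D| = C_tot − Σ_{N∈P} c(N). -/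
open scoped Classical

/-!
The stars centred at a common vertex `o` together form the single star centred at `o` spanning
`⋃_{i ∈ N_o} C_i`, and stars with distinct centres share no arc, so
`|D| = Σ_o (|⋃_{i ∈ N_o} C_i| - 1)`. Double counting the incidences `v ∈ C_i` gives
`|⋃_{i ∈ A} C_i| - 1 = Σ_{i ∈ A} (|C_i| - 1) - c(A)` for every
index set `A`; summing this over the partition `P` of the indices yields the formula.
-/

open Finset

section

variable {ι V : Type*} [DecidableEq V]

def diStar (c : V) (S : Finset V) : Finset (V × V) :=
  (S.erase c).image (Prod.mk c)

lemma card_diStar {c : V} {S : Finset V} (hc : c ∈ S) : #(diStar c S) = #S - 1 := by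
  rw [diStar, card_image_of_injective _ (Prod.mk_right_injective c), card_erase_of_mem hc]

lemma fst_eq_of_mem_diStar {c : V} {S : Finset V} {a : V × V} (ha : a ∈ diStar c S) :
    a.1 = c := by
  obtain ⟨x, -, rfl⟩ := mem_image.1 ha
  rfl

lemma disjoint_diStar {c c' : V} (h : c ≠ c') (S S' : Finset V) :
    Disjoint (diStar c S) (diStar c' S') :=
  disjoint_left.2 fun _ ha ha' =>
    h ((fst_eq_of_mem_diStar ha).symm.trans (fst_eq_of_mem_diStar ha'))

lemma biUnion_diStar (s : Finset ι) (S : ι → Finset V) (c : V) :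
    s.biUnion (fun i => diStar c (S i)) = diStar c (s.biUnion S) := by
  simp only [diStar, erase_biUnion, biUnion_image]

lemma biUnion_diStar_eq_biUnion_centers [DecidableEq ι] (s : Finset ι) (μ : ι → V)
    (C : ι → Finset V) :
    s.biUnion (fun i => diStar (μ i) (C i)) =
      (s.image μ).biUnion fun o => diStar o ({i ∈ s | μ i = o}.biUnion C) := by
  conv_lhs => rw [← image_biUnion_filter_eq s μ, biUnion_biUnion]
  refine biUnion_congr rfl fun o _ => ?_
  rw [← biUnion_diStar]
  exact biUnion_congr rfl fun i hi => by rw [(mem_filter.1 hi).2]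

lemma card_biUnion_diStar [DecidableEq ι] (s : Finset ι) (μ : ι → V) (C : ι → Finset V)
    (hμ : ∀ i ∈ s, μ i ∈ C i) :
    (#(s.biUnion fun i => diStar (μ i) (C i)) : ℤ) =
      ∑ o ∈ s.image μ, ((#({i ∈ s | μ i = o}.biUnion C) : ℤ) - 1) := by
  rw [biUnion_diStar_eq_biUnion_centers, card_biUnion fun o _ o' _ h => disjoint_diStar h _ _,
    Nat.cast_sum]
  refine sum_congr rfl fun o ho => ?_
  obtain ⟨i, hi, rfl⟩ := mem_image.1 ho
  have hcenter : μ i ∈ {j ∈ s | μ j = μ i}.biUnion C :=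
    mem_biUnion.2 ⟨i, mem_filter.2 ⟨hi, rfl⟩, hμ i hi⟩
  rw [card_diStar hcenter, Nat.cast_sub (card_pos.2 ⟨_, hcenter⟩), Nat.cast_one]

lemma sum_card_eq_sum_card_filter_mem (s : Finset ι) (C : ι → Finset V) :
    ∑ i ∈ s, #(C i) = ∑ v ∈ s.biUnion C, #{i ∈ s | v ∈ C i} := by
  refine (sum_congr rfl fun i hi => ?_).trans
    (sum_card_bipartiteAbove_eq_sum_card_bipartiteBelow (t := s.biUnion C) fun i v => v ∈ C i)
  rw [bipartiteAbove, filter_mem_eq_inter, inter_eq_right.2 (subset_biUnion_of_mem C hi)]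

lemma sum_card_sub_one_sub_score [Fintype V] {ℓ : ℕ} (C : Fin ℓ → Finset V)
    (A : Finset (Fin ℓ)) :
    ∑ i ∈ A, ((#(C i) : ℤ) - 1) - score C A = #(unionC C A) - 1 := by
  simp only [score, unionC, sum_sub_distrib, sum_const, nsmul_eq_mul, mul_one]
  rw [← Nat.cast_sum, sum_card_eq_sum_card_filter_mem, Nat.cast_sum]
  ring

section Fibers

variable [Fintype ι] (μ : ι → V)

lemma filter_nonempty_image_filter_eq [DecidableEq ι] [Fintype V] :
    (univ.image fun o => ({i | μ i = o} : Finset ι)).filter (fun A => A.Nonempty) =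
      (univ.image μ).image fun o => ({i | μ i = o} : Finset ι) := by
  ext A
  simp only [mem_filter, mem_image, mem_univ, true_and]
  constructor
  · rintro ⟨⟨o, rfl⟩, i, hi⟩
    exact ⟨o, ⟨i, (mem_filter.1 hi).2⟩, rfl⟩
  · rintro ⟨_, ⟨i, rfl⟩, rfl⟩
    exact ⟨⟨μ i, rfl⟩, i, mem_filter.2 ⟨mem_univ i, rfl⟩⟩

lemma injOn_filter_eq :
    Set.InjOn (fun o => ({i | μ i = o} : Finset ι)) (univ.image μ : Finset V) := by
  intro _ ho _ _ h
  obtain ⟨i, -, rfl⟩ := mem_image.1 ho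
  have hi : i ∈ ({j | μ j = μ i} : Finset ι) := mem_filter.2 ⟨mem_univ i, rfl⟩
  beta_reduce at h
  rw [h] at hi
  exact (mem_filter.1 hi).2

end Fibers

end

theorem directed_stars_to_matching_general
    {V : Type*} [Fintype V] [DecidableEq V]
    (ℓ : ℕ) (C : Fin ℓ → Finset V)
    (μ : Fin ℓ → V) (hμ : ∀ i, μ i ∈ C i)
    (T : Fin ℓ → Finset (V × V))
    (hT : ∀ i, T i = ((C i).erase (μ i)).image (fun x => (μ i, x)))
    (D : Finset (V × V)) (hD : D = Finset.univ.biUnion T)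
    (N : V → Finset (Fin ℓ))
    (hN : ∀ o : V, N o = Finset.univ.filter (fun i => μ i = o))
    (P : Finset (Finset (Fin ℓ)))
    (hP : P = (Finset.univ.image N).filter (fun A => A.Nonempty)) :
    (∀ o : V, (N o).Nonempty → IsHyperedge C (N o) ∧ o ∈ interC C (N o)) ∧
    IsHyperMatching C P ∧
    (∀ i : Fin ℓ, ∃ A ∈ P, i ∈ A) ∧
    (D.card : ℤ) = (∑ i : Fin ℓ, ((C i).card - 1 : ℤ)) - ∑ A ∈ P, score C A := by
  obtain rfl : T = fun i => diStar (μ i) (C i) := funext hT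
  obtain rfl : N = fun o => ({i | μ i = o} : Finset (Fin ℓ)) := funext hN
  rw [filter_nonempty_image_filter_eq] at hP
  subst hD hP
  have hcenter (o : V) : o ∈ interC C {i | μ i = o} := by
    simp only [interC, mem_filter, mem_univ, true_and]
    exact fun i hi => hi ▸ hμ i
  have hedge (o : V) (hne : ({i | μ i = o} : Finset (Fin ℓ)).Nonempty) :
      IsHyperedge C {i | μ i = o} :=
    ⟨hne, o, hcenter o⟩
  refine ⟨fun o hne => ⟨hedge o hne, hcenter o⟩, ⟨?_, ?_⟩, ?_, ?_⟩
  · simp only [mem_image, mem_univ, true_and]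
    rintro _ ⟨_, ⟨i, rfl⟩, rfl⟩
    exact hedge _ ⟨i, mem_filter.2 ⟨mem_univ i, rfl⟩⟩
  · simp only [mem_image]
    rintro _ ⟨o, -, rfl⟩ _ ⟨o', -, rfl⟩ hne
    exact disjoint_filter.2 fun i _ h h' => hne (h ▸ h' ▸ rfl)
  · exact fun i => ⟨_, mem_image_of_mem _ (mem_image_of_mem μ (mem_univ i)),
      mem_filter.2 ⟨mem_univ i, rfl⟩⟩
  · calc (#(univ.biUnion fun i => diStar (μ i) (C i)) : ℤ)
        = ∑ o ∈ univ.image μ, ((#(unionC C {i | μ i = o}) : ℤ) - 1) :=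
          card_biUnion_diStar univ μ C fun i _ => hμ i
      _ = ∑ o ∈ univ.image μ,
            (∑ i ∈ {i | μ i = o}, ((#(C i) : ℤ) - 1) - score C {i | μ i = o}) := by
          simp only [sum_card_sub_one_sub_score]
      _ = _ := by
          rw [sum_sub_distrib, sum_fiberwise_of_maps_to fun i _ => mem_image_of_mem μ (mem_univ i),
            sum_image (injOn_filter_eq μ)]

/-- Given directed stars `T_i` with centers `μ_i ∈ C_i` spanning the communities
`C_i`, grouping the indices by their common star center (`N_o = {i : μ_i = o}`)
yields: each nonempty `N_o` is a hyperedge with `o ∈ ⋂_{i∈N_o} C_i`, the family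
`P = {N_o : N_o ≠ ∅}` is a matching in which every index lies in some hyperedge,
and `|D| = C_tot − Σ_{N∈P} c(N)` where `D = ⋃ T_i`. -/
theorem directed_stars_to_matching
    {V : Type*} [Fintype V] [DecidableEq V]
    (ℓ : ℕ) (C : Fin ℓ → Finset V) (hC : ∀ i, (C i).Nonempty)
    (μ : Fin ℓ → V) (hμ : ∀ i, μ i ∈ C i)
    (T : Fin ℓ → Finset (V × V))
    (hT : ∀ i, T i = ((C i).erase (μ i)).image (fun x => (μ i, x)))
    (D : Finset (V × V)) (hD : D = Finset.univ.biUnion T)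
    (N : V → Finset (Fin ℓ))
    (hN : ∀ o : V, N o = Finset.univ.filter (fun i => μ i = o))
    (P : Finset (Finset (Fin ℓ)))
    (hP : P = (Finset.univ.image N).filter (fun A => A.Nonempty)) :
    (∀ o : V, (N o).Nonempty → IsHyperedge C (N o) ∧ o ∈ interC C (N o)) ∧
    IsHyperMatching C P ∧
    (∀ i : Fin ℓ, ∃ A ∈ P, i ∈ A) ∧
    (D.card : ℤ) = (∑ i : Fin ℓ, ((C i).card - 1 : ℤ)) - ∑ A ∈ P, score C A :=
  directed_stars_to_matching_general ℓ C μ hμ T hT D hD N hN P hP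
end

section
/- Let (C_1, …, C_ℓ) be a finite indexed family of nonempty subsets of V. Let M* be the maximum of Σ_{H∈I} c(H) over all matchings I in the associated hypergraph, and let D* be an arc set on V of minimum cardinality satisfying the directed-star property for every community C_i. Then |D*| = C_tot − M*. -/
open scoped Classical

lemma subset_unionC {V : Type*} [DecidableEq V] {ℓ : ℕ} {C : Fin ℓ → Finset V}
    {H : Finset (Fin ℓ)} {i : Fin ℓ} (hi : i ∈ H) : C i ⊆ unionC C H :=
  Finset.subset_biUnion_of_mem C hi

lemma score_eq {V : Type*} [Fintype V] [DecidableEq V] {ℓ : ℕ}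
    (C : Fin ℓ → Finset V) (H : Finset (Fin ℓ)) :
    score C H = (∑ i ∈ H, ((C i).card - 1 : ℤ)) - (((unionC C H).card : ℤ) - 1) := by
  have key : ∑ v ∈ unionC C H, ((H.filter (fun i => v ∈ C i)).card : ℤ)
      = ∑ i ∈ H, ((C i).card : ℤ) := by
    simp only [Finset.card_filter]
    push_cast
    rw [Finset.sum_comm]
    refine Finset.sum_congr rfl fun i hi => ?_
    rw [← Finset.sum_filter]
    have hfe : (unionC C H).filter (fun v => v ∈ C i) = C i := by
      ext v
      simp only [Finset.mem_filter, unionC, Finset.mem_biUnion]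
      exact ⟨fun h => h.2, fun h => ⟨⟨i, hi, h⟩, h⟩⟩
    rw [hfe, Finset.sum_const, nsmul_eq_mul, mul_one]
  unfold score
  rw [Finset.sum_sub_distrib, key, Finset.sum_const]
  rw [Finset.sum_sub_distrib]
  simp only [Finset.sum_const, nsmul_eq_mul, mul_one]
  ring


/-- If `M*` is the maximum total score of a matching in the associated hypergraph
and `D*` is a minimum-cardinality arc set (on the complete network) satisfying the
directed-star property for every community, then `|D*| = C_tot − M*`. -/
theorem optimal_distars_eq_optimal_matching
    {V : Type*} [Fintype V] [DecidableEq V]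
    (ℓ : ℕ) (C : Fin ℓ → Finset V) (hC : ∀ i, (C i).Nonempty)
    (M : ℤ)
    (hMach : ∃ I : Finset (Finset (Fin ℓ)), IsHyperMatching C I ∧ ∑ H ∈ I, score C H = M)
    (hMmax : ∀ I : Finset (Finset (Fin ℓ)), IsHyperMatching C I → ∑ H ∈ I, score C H ≤ M)
    (Dstar : Finset (V × V)) (hDarc : ∀ p ∈ Dstar, p.1 ≠ p.2)
    (hDsat : ∀ i, DiStarProp Dstar (C i))
    (hDmin : ∀ A : Finset (V × V), (∀ p ∈ A, p.1 ≠ p.2) →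
      (∀ i, DiStarProp A (C i)) → Dstar.card ≤ A.card) :
    (Dstar.card : ℤ) = (∑ i : Fin ℓ, ((C i).card - 1 : ℤ)) - M := by
  apply le_antisymm
  · -- upper bound: construct a feasible arc set of size ≤ Ctot - M from a max matching
    obtain ⟨I, hI, hIsum⟩ := hMach
    choose g hg using fun (H : Finset (Fin ℓ)) (hH : H ∈ I) => (hI.1 H hH).2
    choose h0 hh0 using hC
    set covered : Finset (Fin ℓ) := I.biUnion id with hcovdef
    set A : Finset (V × V) :=
      (I.attach.biUnion (fun H =>
        ((unionC C H.1).erase (g H.1 H.2)).image (fun x => (g H.1 H.2, x))))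
      ∪ ((Finset.univ \ covered).biUnion (fun i =>
        ((C i).erase (h0 i)).image (fun x => (h0 i, x)))) with hAdef
    have hgU : ∀ (H : Finset (Fin ℓ)) (hH : H ∈ I), g H hH ∈ unionC C H := by
      intro H hH
      obtain ⟨i, hi⟩ := (hI.1 H hH).1
      have := hg H hH
      simp only [interC, Finset.mem_filter] at this
      exact subset_unionC hi (this.2 i hi)
    have hAarc : ∀ p ∈ A, p.1 ≠ p.2 := by
      intro p hp
      rcases Finset.mem_union.mp hp with h | h <;>
      · obtain ⟨q, hq, hp'⟩ := Finset.mem_biUnion.mp h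
        obtain ⟨x, hx, rfl⟩ := Finset.mem_image.mp hp'
        exact fun hh => (Finset.mem_erase.mp hx).1 hh.symm
    have hAsat : ∀ i, DiStarProp A (C i) := by
      intro i
      by_cases hic : i ∈ covered
      · obtain ⟨H, hH, hiH⟩ := Finset.mem_biUnion.mp hic
        simp only [id] at hiH
        have hgC : g H hH ∈ C i := by
          have := hg H hH
          simp only [interC, Finset.mem_filter] at this
          exact this.2 i hiH
        refine ⟨g H hH, hgC, fun x hx hxc => ?_⟩
        apply Finset.mem_union_left
        refine Finset.mem_biUnion.mpr ⟨⟨H, hH⟩, Finset.mem_attach _ _, ?_⟩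
        exact Finset.mem_image.mpr ⟨x, Finset.mem_erase.mpr ⟨hxc, subset_unionC hiH hx⟩, rfl⟩
      · refine ⟨h0 i, hh0 i, fun x hx hxc => ?_⟩
        apply Finset.mem_union_right
        refine Finset.mem_biUnion.mpr ⟨i, Finset.mem_sdiff.mpr ⟨Finset.mem_univ _, hic⟩, ?_⟩
        exact Finset.mem_image.mpr ⟨x, Finset.mem_erase.mpr ⟨hxc, hx⟩, rfl⟩
    -- cardinality bound
    have hcardA : (A.card : ℤ) ≤
        (∑ H ∈ I, (((unionC C H).card : ℤ) - 1)) +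
          ∑ i ∈ Finset.univ \ covered, (((C i).card : ℤ) - 1) := by
      have h1 : ((I.attach.biUnion (fun H =>
          ((unionC C H.1).erase (g H.1 H.2)).image (fun x => (g H.1 H.2, x)))).card : ℤ) ≤
          ∑ H ∈ I, (((unionC C H).card : ℤ) - 1) := by
        calc ((I.attach.biUnion _).card : ℤ)
            ≤ ((∑ H ∈ I.attach, (((unionC C H.1).erase (g H.1 H.2)).image
                (fun x => (g H.1 H.2, x))).card : ℕ) : ℤ) := by
              exact_mod_cast Finset.card_biUnion_le
          _ ≤ ∑ H ∈ I.attach, (((unionC C H.1).card : ℤ) - 1) := by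
              push_cast
              refine Finset.sum_le_sum fun H _ => ?_
              have h2 : (((unionC C H.1).erase (g H.1 H.2)).image
                  (fun x => (g H.1 H.2, x))).card ≤ ((unionC C H.1).erase (g H.1 H.2)).card :=
                Finset.card_image_le
              have h3 : ((unionC C H.1).erase (g H.1 H.2)).card
                  = (unionC C H.1).card - 1 := Finset.card_erase_of_mem (hgU H.1 H.2)
              have h4 : 1 ≤ (unionC C H.1).card :=
                Finset.card_pos.mpr ⟨g H.1 H.2, hgU H.1 H.2⟩
              have := h3 ▸ h2
              omega
          _ = ∑ H ∈ I, (((unionC C H).card : ℤ) - 1) := by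
              rw [← Finset.sum_attach I (fun H => (((unionC C H).card : ℤ) - 1))]
      have h5 : (((Finset.univ \ covered).biUnion (fun i =>
          ((C i).erase (h0 i)).image (fun x => (h0 i, x)))).card : ℤ) ≤
          ∑ i ∈ Finset.univ \ covered, (((C i).card : ℤ) - 1) := by
        calc (((Finset.univ \ covered).biUnion _).card : ℤ)
            ≤ ((∑ i ∈ Finset.univ \ covered, (((C i).erase (h0 i)).image
                (fun x => (h0 i, x))).card : ℕ) : ℤ) := by
              exact_mod_cast Finset.card_biUnion_le
          _ ≤ ∑ i ∈ Finset.univ \ covered, (((C i).card : ℤ) - 1) := by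
              push_cast
              refine Finset.sum_le_sum fun i _ => ?_
              have h2 : (((C i).erase (h0 i)).image (fun x => (h0 i, x))).card
                  ≤ ((C i).erase (h0 i)).card := Finset.card_image_le
              have h3 : ((C i).erase (h0 i)).card = (C i).card - 1 :=
                Finset.card_erase_of_mem (hh0 i)
              have h4 : 1 ≤ (C i).card := Finset.card_pos.mpr ⟨h0 i, hh0 i⟩
              have := h3 ▸ h2
              omega
      have hu : (A.card : ℤ) ≤
          ((I.attach.biUnion (fun H =>
            ((unionC C H.1).erase (g H.1 H.2)).image (fun x => (g H.1 H.2, x)))).card : ℤ)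
          + (((Finset.univ \ covered).biUnion (fun i =>
            ((C i).erase (h0 i)).image (fun x => (h0 i, x)))).card : ℤ) := by
        rw [hAdef]
        exact_mod_cast Finset.card_union_le _ _
      linarith
    -- score identity
    have hdisj : (I : Set (Finset (Fin ℓ))).PairwiseDisjoint id := by
      intro H hH H' hH' hne
      exact hI.2 H hH H' hH' hne
    have hscore : ∑ H ∈ I, (((unionC C H).card : ℤ) - 1)
        = (∑ i ∈ covered, ((C i).card - 1 : ℤ)) - M := by
      have : ∑ H ∈ I, score C H
          = (∑ H ∈ I, ∑ i ∈ H, ((C i).card - 1 : ℤ))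
            - ∑ H ∈ I, (((unionC C H).card : ℤ) - 1) := by
        rw [← Finset.sum_sub_distrib]
        exact Finset.sum_congr rfl fun H _ => score_eq C H
      rw [hIsum] at this
      have hfib : ∑ H ∈ I, ∑ i ∈ H, ((C i).card - 1 : ℤ)
          = ∑ i ∈ covered, ((C i).card - 1 : ℤ) := by
        rw [hcovdef, Finset.sum_biUnion hdisj]
        rfl
      rw [hfib] at this
      linarith
    have hfinal : (A.card : ℤ) ≤ (∑ i : Fin ℓ, ((C i).card - 1 : ℤ)) - M := by
      have hsplit : (∑ i ∈ Finset.univ \ covered, ((C i).card - 1 : ℤ))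
          + ∑ i ∈ covered, ((C i).card - 1 : ℤ)
          = ∑ i : Fin ℓ, ((C i).card - 1 : ℤ) :=
        Finset.sum_sdiff (Finset.subset_univ covered)
      rw [hscore] at hcardA
      linarith
    calc (Dstar.card : ℤ) ≤ (A.card : ℤ) := by exact_mod_cast hDmin A hAarc hAsat
      _ ≤ _ := hfinal
  · -- lower bound: build a matching from Dstar
    choose f hf1 hf2 using hDsat
    set T : Finset V := Finset.univ.image f with hTdef
    set Hc : V → Finset (Fin ℓ) := fun c => Finset.univ.filter (fun i => f i = c) with hHcdef
    set I : Finset (Finset (Fin ℓ)) := T.image Hc with hIdef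
    have hmemHc : ∀ {i : Fin ℓ} {c : V}, i ∈ Hc c ↔ f i = c := by
      intro i c; simp [hHcdef]
    have hTmem : ∀ c ∈ T, ∃ i, f i = c := by
      intro c hc
      obtain ⟨i, _, hi⟩ := Finset.mem_image.mp hc
      exact ⟨i, hi⟩
    have hinj : ∀ c ∈ T, ∀ c' ∈ T, Hc c = Hc c' → c = c' := by
      intro c hc c' _ he
      obtain ⟨i, hi⟩ := hTmem c hc
      have : i ∈ Hc c' := he ▸ hmemHc.mpr hi
      rw [← hi]; exact hmemHc.mp this
    have hmatch : IsHyperMatching C I := by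
      constructor
      · intro H hH
        obtain ⟨c, hc, rfl⟩ := Finset.mem_image.mp hH
        obtain ⟨i, hi⟩ := hTmem c hc
        refine ⟨⟨i, hmemHc.mpr hi⟩, ⟨c, ?_⟩⟩
        simp only [interC, Finset.mem_filter]
        refine ⟨Finset.mem_univ _, fun j hj => ?_⟩
        rw [← hmemHc.mp hj]
        exact hf1 j
      · intro H hH H' hH' hne
        obtain ⟨c, hc, rfl⟩ := Finset.mem_image.mp hH
        obtain ⟨c', hc', rfl⟩ := Finset.mem_image.mp hH'
        have hcc : c ≠ c' := fun h => hne (by rw [h])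
        refine Finset.disjoint_left.mpr fun i hi hi' => ?_
        exact hcc ((hmemHc.mp hi).symm.trans (hmemHc.mp hi'))
    -- arc counting
    set S : V → Finset (V × V) := fun c =>
      ((unionC C (Hc c)).erase c).image (fun x => (c, x)) with hSdef
    have hcmem : ∀ c ∈ T, c ∈ unionC C (Hc c) := by
      intro c hc
      obtain ⟨i, hi⟩ := hTmem c hc
      exact subset_unionC (hmemHc.mpr hi) (hi ▸ hf1 i)
    have hScard : ∀ c ∈ T, ((S c).card : ℤ) = ((unionC C (Hc c)).card : ℤ) - 1 := by
      intro c hc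
      have hinj2 : Function.Injective (fun x : V => (c, x)) := by
        intro a b h; exact congrArg Prod.snd h
      rw [hSdef]
      simp only
      rw [Finset.card_image_of_injective _ hinj2, Finset.card_erase_of_mem (hcmem c hc)]
      have : 1 ≤ (unionC C (Hc c)).card := Finset.card_pos.mpr ⟨c, hcmem c hc⟩
      omega
    have hSsub : ∀ c ∈ T, S c ⊆ Dstar := by
      intro c hc p hp
      obtain ⟨x, hx, rfl⟩ := Finset.mem_image.mp hp
      obtain ⟨hxc, hxU⟩ := Finset.mem_erase.mp hx
      obtain ⟨i, hiHc, hxCi⟩ := Finset.mem_biUnion.mp hxU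
      have hfi := hmemHc.mp hiHc
      have := hf2 i x hxCi (hfi ▸ hxc)
      rwa [hfi] at this
    have hSdisj : (T : Set V).PairwiseDisjoint S := by
      intro c _ c' _ hne
      refine Finset.disjoint_left.mpr fun p hp hp' => ?_
      obtain ⟨x, _, rfl⟩ := Finset.mem_image.mp hp
      obtain ⟨y, _, he⟩ := Finset.mem_image.mp hp'
      exact hne (congrArg Prod.fst he).symm
    have harcs : ∑ c ∈ T, (((unionC C (Hc c)).card : ℤ) - 1) ≤ (Dstar.card : ℤ) := by
      have h1 : ∑ c ∈ T, (((unionC C (Hc c)).card : ℤ) - 1) = ∑ c ∈ T, ((S c).card : ℤ) :=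
        (Finset.sum_congr rfl fun c hc => (hScard c hc).symm)
      rw [h1]
      have h2 : ∑ c ∈ T, (S c).card = (T.biUnion S).card := (Finset.card_biUnion hSdisj).symm
      have h3 : (T.biUnion S).card ≤ Dstar.card :=
        Finset.card_le_card (Finset.biUnion_subset.mpr hSsub)
      exact_mod_cast h2 ▸ (Nat.cast_le.mpr h3 : ((T.biUnion S).card : ℤ) ≤ Dstar.card)
    have hsum : ∑ H ∈ I, score C H
        = (∑ i : Fin ℓ, ((C i).card - 1 : ℤ)) - ∑ c ∈ T, (((unionC C (Hc c)).card : ℤ) - 1) := by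
      rw [hIdef, Finset.sum_image hinj]
      have := Finset.sum_congr rfl fun c (_ : c ∈ T) => score_eq C (Hc c)
      rw [this, Finset.sum_sub_distrib]
      congr 1
      rw [hHcdef]
      exact Finset.sum_fiberwise_of_maps_to (fun i _ => Finset.mem_image_of_mem f (Finset.mem_univ i)) _
    have := hMmax I hmatch
    rw [hsum] at this
    linarith
end

section
/- Let (C_1, …, C_ℓ) be a finite indexed family of nonempty subsets of V with ℓ ≥ 1, and let k = max{|H| : H is a hyperedge}. Let H_1, …, H_r be a greedy matching: the H_t are pairwise disjoint hyperedges, for each t ∈ {1,…,r} the hyperedge H_t has maximum score c among all hyperedges disjoint from H_1 ∪ … ∪ H_{t−1}, and no hyperedge is disjoint from all of H_1, …, H_r. Then for every matching I, Σ_{H∈I} c(H) ≤ k · Σ_{t=1}^{r} c(H_t). -/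
open scoped Classical

/-- The greedy matching `H_1, …, H_r` (each `H_t` of maximum score among hyperedges
disjoint from the previously chosen ones, until no hyperedge is disjoint from all
chosen ones) is a `k`-factor approximation: for every matching `I`,
`Σ_{H∈I} c(H) ≤ k · Σ_t c(H_t)`, where `k` is the maximum hyperedge size. -/
theorem greedy_matching_k_approximation
    {V : Type*} [Fintype V] [DecidableEq V]
    (ℓ : ℕ) (hℓ : 1 ≤ ℓ) (C : Fin ℓ → Finset V) (hC : ∀ i, (C i).Nonempty)
    (k : ℕ)
    (hk_ub : ∀ H : Finset (Fin ℓ), IsHyperedge C H → H.card ≤ k)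
    (hk_max : ∃ H : Finset (Fin ℓ), IsHyperedge C H ∧ H.card = k)
    (r : ℕ) (Hs : Fin r → Finset (Fin ℓ))
    (hHs : ∀ t, IsHyperedge C (Hs t))
    (hdisj : ∀ s t : Fin r, s ≠ t → Disjoint (Hs s) (Hs t))
    (hgreedy : ∀ t : Fin r, ∀ H : Finset (Fin ℓ), IsHyperedge C H →
      (∀ s : Fin r, s < t → Disjoint H (Hs s)) → score C H ≤ score C (Hs t))
    (hmaximal : ¬ ∃ H : Finset (Fin ℓ), IsHyperedge C H ∧ ∀ t : Fin r, Disjoint H (Hs t))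
    (I : Finset (Finset (Fin ℓ))) (hI : IsHyperMatching C I) :
    ∑ H ∈ I, score C H ≤ (k : ℤ) * ∑ t : Fin r, score C (Hs t) := by
  classical
  -- score of any hyperedge is nonnegative
  have hnn : ∀ H, IsHyperedge C H → 0 ≤ score C H := by
    intro H hH
    obtain ⟨hHne, v, hv⟩ := hH
    simp only [interC, Finset.mem_filter] at hv
    have hvU : v ∈ unionC C H := by
      obtain ⟨i, hi⟩ := hHne
      exact Finset.mem_biUnion.mpr ⟨i, hi, hv.2 i hi⟩
    have h1 : ((H.filter (fun i => v ∈ C i)).card : ℤ) - 1 = (H.card : ℤ) - 1 := by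
      have : H.filter (fun i => v ∈ C i) = H :=
        Finset.filter_true_of_mem (fun i hi => hv.2 i hi)
      rw [this]
    have hsum : (H.card : ℤ) - 1 ≤
        ∑ v' ∈ unionC C H, (((H.filter (fun i => v' ∈ C i)).card : ℤ) - 1) := by
      rw [← h1]
      refine Finset.single_le_sum (f := fun v' =>
        ((H.filter (fun i => v' ∈ C i)).card : ℤ) - 1) ?_ hvU
      intro x hx
      simp only [unionC, Finset.mem_biUnion] at hx
      obtain ⟨i, hi, hxi⟩ := hx
      have : 0 < (H.filter (fun j => x ∈ C j)).card :=
        Finset.card_pos.mpr ⟨i, Finset.mem_filter.mpr ⟨hi, hxi⟩⟩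
      show (0:ℤ) ≤ ((H.filter (fun i => x ∈ C i)).card : ℤ) - 1
      omega
    unfold score
    linarith
  -- each H ∈ I intersects some Hs t
  have hhit : ∀ H ∈ I, ∃ t : Fin r, ¬ Disjoint H (Hs t) := by
    intro H hH
    by_contra h
    push_neg at h
    exact hmaximal ⟨H, hI.1 H hH, h⟩
  rcases Nat.eq_zero_or_pos r with hr | hr
  · subst hr
    have hIe : I = ∅ := by
      rcases I.eq_empty_or_nonempty with he | ⟨H, hH⟩
      · exact he
      · obtain ⟨t, _⟩ := hhit H hH
        exact absurd t.2 (by omega)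
    simp [hIe]
  -- T H : the set of indices t whose Hs t meets H; f H : the least such t
  set T : Finset (Fin ℓ) → Finset (Fin r) :=
    fun H => Finset.univ.filter (fun t => ¬ Disjoint H (Hs t)) with hT
  have hTne : ∀ H ∈ I, (T H).Nonempty := by
    intro H hH
    obtain ⟨t, ht⟩ := hhit H hH
    exact ⟨t, Finset.mem_filter.mpr ⟨Finset.mem_univ _, ht⟩⟩
  set f : Finset (Fin ℓ) → Fin r :=
    fun H => if h : (T H).Nonempty then (T H).min' h else ⟨0, hr⟩ with hf
  have hfmem : ∀ H ∈ I, ¬ Disjoint H (Hs (f H)) := by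
    intro H hH
    have hne := hTne H hH
    have : f H ∈ T H := by
      simp only [hf, dif_pos hne]
      exact (T H).min'_mem hne
    simpa [hT] using (Finset.mem_filter.mp this).2
  have hfmin : ∀ H ∈ I, ∀ s : Fin r, s < f H → Disjoint H (Hs s) := by
    intro H hH s hs
    by_contra hnd
    have hsT : s ∈ T H := Finset.mem_filter.mpr ⟨Finset.mem_univ _, hnd⟩
    have hne := hTne H hH
    have := (T H).min'_le s hsT
    simp only [hf, dif_pos hne] at hs
    exact absurd hs (not_lt.mpr this)
  -- score H ≤ score Hs (f H)
  have hcharge : ∀ H ∈ I, score C H ≤ score C (Hs (f H)) := by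
    intro H hH
    exact hgreedy (f H) H (hI.1 H hH) (hfmin H hH)
  -- fiber cardinality bound
  have hfiber : ∀ t : Fin r, (I.filter (fun H => f H = t)).card ≤ k := by
    intro t
    have hsub : ∀ H ∈ I.filter (fun H => f H = t), (H ∩ Hs t).Nonempty := by
      intro H hH
      rw [Finset.mem_filter] at hH
      have := hfmem H hH.1
      rw [hH.2] at this
      exact Finset.not_disjoint_iff_nonempty_inter.mp this
    set e : Finset (Fin ℓ) → Fin ℓ := fun H =>
      if h : (H ∩ Hs t).Nonempty then h.choose else ⟨0, hℓ⟩ with he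
    have hemem : ∀ H ∈ I.filter (fun H => f H = t), e H ∈ H ∩ Hs t := by
      intro H hH
      have h := hsub H hH
      simp only [he, dif_pos h]
      exact h.choose_spec
    have : (I.filter (fun H => f H = t)).card ≤ (Hs t).card := by
      apply Finset.card_le_card_of_injOn e
      · intro H hH
        exact (Finset.mem_inter.mp (hemem H hH)).2
      · intro H1 h1 H2 h2 heq
        by_contra hne
        have hd : Disjoint H1 H2 := hI.2 H1 (Finset.mem_filter.mp h1).1
          H2 (Finset.mem_filter.mp h2).1 hne
        have m1 : e H1 ∈ H1 := (Finset.mem_inter.mp (hemem H1 h1)).1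
        have m2 : e H2 ∈ H2 := (Finset.mem_inter.mp (hemem H2 h2)).1
        rw [heq] at m1
        exact (Finset.disjoint_left.mp hd) (heq ▸ m1) m2
    exact this.trans (hk_ub (Hs t) (hHs t))
  -- put it together
  calc ∑ H ∈ I, score C H
      ≤ ∑ H ∈ I, score C (Hs (f H)) := Finset.sum_le_sum hcharge
    _ = ∑ t : Fin r, ∑ H ∈ I.filter (fun H => f H = t), score C (Hs (f H)) :=
        (Finset.sum_fiberwise I f (fun H => score C (Hs (f H)))).symm
    _ = ∑ t : Fin r, ∑ H ∈ I.filter (fun H => f H = t), score C (Hs t) := by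
        refine Finset.sum_congr rfl fun t _ => Finset.sum_congr rfl fun H hH => ?_
        rw [(Finset.mem_filter.mp hH).2]
    _ = ∑ t : Fin r, ((I.filter (fun H => f H = t)).card : ℤ) * score C (Hs t) := by
        simp [Finset.sum_const, mul_comm]
    _ ≤ ∑ t : Fin r, (k : ℤ) * score C (Hs t) := by
        refine Finset.sum_le_sum fun t _ => ?_
        exact mul_le_mul_of_nonneg_right (by exact_mod_cast hfiber t) (hnn _ (hHs t))
    _ = (k : ℤ) * ∑ t : Fin r, score C (Hs t) := (Finset.mul_sum _ _ _).symm
end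

section
/- Let (C_1, …, C_ℓ) be a finite indexed family of nonempty subsets of V with ℓ ≥ 1, let k = max{|H| : H is a hyperedge}, and let J = {H_1, …, H_r} be a greedy matching (pairwise disjoint hyperedges, each H_t of maximum score among hyperedges disjoint from H_1, …, H_{t−1}, and no hyperedge disjoint from all of them). For each H ∈ J fix a center c_H ∈ ⋂_{i∈H} C_i and let D_J = ⋃_{H∈J} {(c_H→x) : x ∈ ⋃_{i∈H} C_i, x ≠ c_H}. Let D* be an arc set on V of minimum cardinality satisfying the directed-star property for every community C_i. Then |D_J| ≤ ((k−1)/k)·C_tot + (1/k)·|D*|. -/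
open scoped Classical

/-!
Write `C_tot = ∑ (|C_i| - 1)` and `S` for the total score of the greedy matching. The score is
exactly the overlap saved by a single star: `|⋃_{i∈H} C_i| - 1 = ∑_{i∈H} (|C_i| - 1) - c(H)`, so the
stars of the matching give `|D_J| ≤ C_tot - S`.

Conversely, fix for every community a centre of its star in `D*` and group the communities by
centre. The groups `F_c` are pairwise disjoint hyperedges covering all indices, and their stars
are disjoint subsets of `D*`, so `|D*| ≥ C_tot - ∑ c(F_c)`. Charge each `F_c` to the first greedy
hyperedge it meets: by the greedy choice `c(F_c)` is at most that hyperedge's score, and a greedy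
hyperedge `H` is charged at most `|H| ≤ k` times because the `F_c` are disjoint. Hence
`∑ c(F_c) ≤ k S`, and `k |D_J| ≤ k C_tot - k S ≤ (k - 1) C_tot + |D*|`.
-/

open Finset Function

theorem DiStarProp.nonempty {V : Type*} {A : Finset (V × V)} {S : Finset V}
    (h : DiStarProp A S) : S.Nonempty :=
  let ⟨c, hc, _⟩ := h; ⟨c, hc⟩

section Star

variable {V : Type*} [DecidableEq V]

def starArcs (c : V) (U : Finset V) : Finset (V × V) :=
  (U.erase c).image (Prod.mk c)

theorem card_starArcs {c : V} {U : Finset V} (hc : c ∈ U) :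
    (#(starArcs c U) : ℤ) = #U - 1 := by
  rw [starArcs, card_image_of_injective _ (Prod.mk_right_injective c), card_erase_of_mem hc,
    Nat.cast_sub (card_pos.2 ⟨c, hc⟩), Nat.cast_one]

theorem disjoint_starArcs {c c' : V} (h : c ≠ c') (U U' : Finset V) :
    Disjoint (starArcs c U) (starArcs c' U') := by
  simp only [starArcs, disjoint_left, mem_image]
  rintro _ ⟨x, -, rfl⟩ ⟨y, -, hy⟩
  exact h (congrArg Prod.fst hy).symm

end Star

section Score

variable {V : Type*} {ℓ : ℕ} (C : Fin ℓ → Finset V)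

theorem mem_interC [Fintype V] {H : Finset (Fin ℓ)} {v : V} :
    v ∈ interC C H ↔ ∀ i ∈ H, v ∈ C i := by
  simp [interC]

variable [DecidableEq V]

theorem sum_card_filter_mem_unionC (H : Finset (Fin ℓ)) :
    ∑ v ∈ unionC C H, #{i ∈ H | v ∈ C i} = ∑ i ∈ H, #(C i) := by
  have := sum_card_bipartiteAbove_eq_sum_card_bipartiteBelow (s := unionC C H) (t := H)
    (r := fun v i => v ∈ C i)
  refine this.trans (sum_congr rfl fun i hi => congrArg card ?_)
  rw [bipartiteBelow, filter_mem_eq_inter, inter_eq_right]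
  exact subset_biUnion_of_mem C hi

variable [Fintype V]

theorem card_unionC_sub_one (H : Finset (Fin ℓ)) :
    (#(unionC C H) : ℤ) - 1 = ∑ i ∈ H, ((#(C i) : ℤ) - 1) - score C H := by
  have := congrArg (Nat.cast : ℕ → ℤ) (sum_card_filter_mem_unionC C H)
  push_cast at this
  simp only [score, sum_sub_distrib, this, sum_const, nsmul_eq_mul, mul_one]
  ring

theorem mem_unionC_of_mem_interC {H : Finset (Fin ℓ)} (hH : H.Nonempty) {v : V}
    (hv : v ∈ interC C H) : v ∈ unionC C H := by
  obtain ⟨i, hi⟩ := hH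
  exact mem_biUnion.2 ⟨i, hi, (mem_interC C).1 hv i hi⟩

theorem score_nonneg {H : Finset (Fin ℓ)} (hH : IsHyperedge C H) : 0 ≤ score C H := by
  obtain ⟨hne, v, hv⟩ := hH
  have hvU := mem_unionC_of_mem_interC C hne hv
  have hfull : {i ∈ H | v ∈ C i} = H := filter_true_of_mem ((mem_interC C).1 hv)
  have hrest : 0 ≤ ∑ w ∈ (unionC C H).erase v, ((#{i ∈ H | w ∈ C i} : ℤ) - 1) := by
    refine sum_nonneg fun w hw => ?_
    obtain ⟨i, hi, hwi⟩ := mem_biUnion.1 (mem_of_mem_erase hw)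
    have : 0 < #{i ∈ H | w ∈ C i} := card_pos.2 ⟨i, mem_filter.2 ⟨hi, hwi⟩⟩
    omega
  rw [score, ← add_sum_erase _ _ hvU, hfull]
  linarith

theorem card_biUnion_starArcs_le (hC : ∀ i, (C i).Nonempty) {ι : Type*} [Fintype ι]
    {Hs : ι → Finset (Fin ℓ)} (hHs : ∀ t, (Hs t).Nonempty) (hdisj : Pairwise (Disjoint on Hs))
    {ctr : ι → V} (hctr : ∀ t, ctr t ∈ interC C (Hs t)) :
    (#(univ.biUnion fun t => starArcs (ctr t) (unionC C (Hs t))) : ℤ)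
      ≤ ∑ i, ((#(C i) : ℤ) - 1) - ∑ t, score C (Hs t) := by
  calc (#(univ.biUnion fun t => starArcs (ctr t) (unionC C (Hs t))) : ℤ)
      ≤ ∑ t, (#(starArcs (ctr t) (unionC C (Hs t))) : ℤ) := mod_cast card_biUnion_le
    _ = ∑ t, ∑ i ∈ Hs t, ((#(C i) : ℤ) - 1) - ∑ t, score C (Hs t) := by
        rw [← sum_sub_distrib]
        refine sum_congr rfl fun t _ => ?_
        rw [card_starArcs (mem_unionC_of_mem_interC C (hHs t) (hctr t)), card_unionC_sub_one]
    _ = ∑ i ∈ univ.biUnion Hs, ((#(C i) : ℤ) - 1) - ∑ t, score C (Hs t) := by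
        rw [sum_biUnion (hdisj.set_pairwise _)]
    _ ≤ ∑ i, ((#(C i) : ℤ) - 1) - ∑ t, score C (Hs t) := by
        refine sub_le_sub_right (sum_le_sum_of_subset_of_nonneg (subset_univ _) ?_) _
        intro i _ _
        have := card_pos.2 (hC i)
        omega

theorem exists_disjoint_hyperedges_sum_sub_sum_score_le_card {A : Finset (V × V)}
    (hA : ∀ i, DiStarProp A (C i)) :
    ∃ (T : Finset V) (F : V → Finset (Fin ℓ)), (∀ c ∈ T, IsHyperedge C (F c)) ∧
      (T : Set V).PairwiseDisjoint F ∧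
      ∑ i, ((#(C i) : ℤ) - 1) - ∑ c ∈ T, score C (F c) ≤ #A := by
  choose cc hcc hstar using hA
  set T := univ.image cc
  set F : V → Finset (Fin ℓ) := fun c => {i | cc i = c}
  have hcF (i : Fin ℓ) : i ∈ F (cc i) := mem_filter.2 ⟨mem_univ i, rfl⟩
  have hinter : ∀ c ∈ T, c ∈ interC C (F c) := by
    rintro _ hc
    obtain ⟨i, -, rfl⟩ := mem_image.1 hc
    exact (mem_interC C).2 fun j hj => (mem_filter.1 hj).2 ▸ hcc j
  have hF : ∀ c ∈ T, IsHyperedge C (F c) := by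
    intro c hc
    obtain ⟨i, -, rfl⟩ := mem_image.1 hc
    exact ⟨⟨i, hcF i⟩, _, hinter _ hc⟩
  have hdisj : (T : Set V).PairwiseDisjoint F := fun c _ c' _ hne =>
    disjoint_left.2 fun i hi hi' => hne ((mem_filter.1 hi).2.symm.trans (mem_filter.1 hi').2)
  have hstarA : T.biUnion (fun c => starArcs c (unionC C (F c))) ⊆ A := by
    simp only [biUnion_subset, starArcs, image_subset_iff, mem_erase]
    rintro c - x ⟨hxc, hx⟩
    obtain ⟨j, hj, hxj⟩ := mem_biUnion.1 hx
    obtain rfl := (mem_filter.1 hj).2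
    exact hstar j x hxj hxc
  have hpart (g : Fin ℓ → ℤ) : ∑ c ∈ T, ∑ i ∈ F c, g i = ∑ i, g i :=
    sum_fiberwise_of_maps_to (fun i _ => mem_image_of_mem cc (mem_univ i)) g
  refine ⟨T, F, hF, hdisj, ?_⟩
  calc ∑ i, ((#(C i) : ℤ) - 1) - ∑ c ∈ T, score C (F c)
      = ∑ c ∈ T, (#(starArcs c (unionC C (F c))) : ℤ) := by
        rw [← hpart, ← sum_sub_distrib]
        refine sum_congr rfl fun c hc => ?_
        rw [card_starArcs (mem_unionC_of_mem_interC C (hF c hc).1 (hinter c hc)),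
          card_unionC_sub_one]
    _ = #(T.biUnion fun c => starArcs c (unionC C (F c))) := by
        rw [card_biUnion fun c _ c' _ hne => disjoint_starArcs hne _ _]
        push_cast; rfl
    _ ≤ #A := mod_cast card_le_card hstarA

end Score

theorem card_filter_not_disjoint_le {ι α : Type*} [DecidableEq α] {T : Finset ι}
    {F : ι → Finset α} (hF : (T : Set ι).PairwiseDisjoint F) (H : Finset α) :
    #{c ∈ T | ¬Disjoint (F c) H} ≤ #H := by
  set T' := {c ∈ T | ¬Disjoint (F c) H}
  have hF' : (T' : Set ι).PairwiseDisjoint (fun c => F c ∩ H) :=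
    (hF.subset (coe_subset.2 (filter_subset _ _))).mono fun c => inter_subset_left
  calc #T' = ∑ c ∈ T', 1 := card_eq_sum_ones T'
    _ ≤ ∑ c ∈ T', #(F c ∩ H) := sum_le_sum fun c hc =>
        card_pos.2 (not_disjoint_iff_nonempty_inter.1 (mem_filter.1 hc).2)
    _ = #(T'.biUnion fun c => F c ∩ H) := (card_biUnion hF').symm
    _ ≤ #H := card_le_card (biUnion_subset.2 fun c _ => inter_subset_right)

section Greedy

variable {V : Type*} [Fintype V] {ℓ : ℕ} (C : Fin ℓ → Finset V)
  {r : ℕ} {Hs : Fin r → Finset (Fin ℓ)}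

theorem exists_first_not_disjoint
    (hmaximal : ¬ ∃ H : Finset (Fin ℓ), IsHyperedge C H ∧ ∀ t : Fin r, Disjoint H (Hs t))
    {F : Finset (Fin ℓ)} (hF : IsHyperedge C F) :
    ∃ t, ¬Disjoint F (Hs t) ∧ ∀ s < t, Disjoint F (Hs s) := by
  obtain ⟨t, ht⟩ : ∃ t, ¬Disjoint F (Hs t) := by
    by_contra! h
    exact hmaximal ⟨F, hF, h⟩
  obtain ⟨t, ht, hmin⟩ := wellFounded_lt.has_min {t | ¬Disjoint F (Hs t)} ⟨t, ht⟩
  exact ⟨t, ht, fun s hs => not_not.1 fun h => hmin s h hs⟩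

variable [DecidableEq V]

theorem sum_score_le_mul_sum_score_greedy {k : ℕ}
    (hk_ub : ∀ H : Finset (Fin ℓ), IsHyperedge C H → H.card ≤ k)
    (hHs : ∀ t, IsHyperedge C (Hs t))
    (hgreedy : ∀ t : Fin r, ∀ H : Finset (Fin ℓ), IsHyperedge C H →
      (∀ s : Fin r, s < t → Disjoint H (Hs s)) → score C H ≤ score C (Hs t))
    (hmaximal : ¬ ∃ H : Finset (Fin ℓ), IsHyperedge C H ∧ ∀ t : Fin r, Disjoint H (Hs t))
    {ι : Type*} [DecidableEq ι] {T : Finset ι} {F : ι → Finset (Fin ℓ)}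
    (hF : ∀ c ∈ T, IsHyperedge C (F c)) (hFdisj : (T : Set ι).PairwiseDisjoint F) :
    ∑ c ∈ T, score C (F c) ≤ k * ∑ t, score C (Hs t) := by
  have hcharge : ∀ c ∈ T, ∃ t, score C (F c) ≤ score C (Hs t) ∧ ¬Disjoint (F c) (Hs t) :=
    fun c hc =>
      let ⟨t, hmeet, hfirst⟩ := exists_first_not_disjoint C hmaximal (hF c hc)
      ⟨t, hgreedy t _ (hF c hc) hfirst, hmeet⟩
  obtain rfl | ⟨c₀, hc₀⟩ := T.eq_empty_or_nonempty
  · simpa using mul_nonneg k.cast_nonneg (sum_nonneg fun t _ => score_nonneg C (hHs t))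
  have : Nonempty (Fin r) := let ⟨t, _⟩ := hcharge c₀ hc₀; ⟨t⟩
  choose! τ hτscore hτmeet using hcharge
  have hload (t : Fin r) : #{c ∈ T | τ c = t} ≤ k :=
    calc #{c ∈ T | τ c = t} ≤ #{c ∈ T | ¬Disjoint (F c) (Hs t)} :=
          card_le_card fun c hc => by
            obtain ⟨hcT, rfl⟩ := mem_filter.1 hc
            exact mem_filter.2 ⟨hcT, hτmeet c hcT⟩
      _ ≤ #(Hs t) := card_filter_not_disjoint_le hFdisj (Hs t)
      _ ≤ k := hk_ub _ (hHs t)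
  calc ∑ c ∈ T, score C (F c) ≤ ∑ c ∈ T, score C (Hs (τ c)) := sum_le_sum hτscore
    _ = ∑ t ∈ T.image τ, #{c ∈ T | τ c = t} • score C (Hs t) :=
        sum_comp (fun t => score C (Hs t)) τ
    _ ≤ ∑ t ∈ T.image τ, k • score C (Hs t) := by
        gcongr with t
        exacts [score_nonneg C (hHs t), hload t]
    _ ≤ ∑ t, k • score C (Hs t) :=
        sum_le_sum_of_subset_of_nonneg (subset_univ _) fun t _ _ =>
          nsmul_nonneg (score_nonneg C (hHs t)) k
    _ = k * ∑ t, score C (Hs t) := by simp only [nsmul_eq_mul, mul_sum]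

end Greedy

theorem greedy_distars_bound_general
    {V : Type*} [Fintype V] [DecidableEq V]
    (ℓ : ℕ) (C : Fin ℓ → Finset V)
    (k : ℕ)
    (hk_ub : ∀ H : Finset (Fin ℓ), IsHyperedge C H → H.card ≤ k)
    (r : ℕ) (Hs : Fin r → Finset (Fin ℓ))
    (hHs : ∀ t, IsHyperedge C (Hs t))
    (hdisj : ∀ s t : Fin r, s ≠ t → Disjoint (Hs s) (Hs t))
    (hgreedy : ∀ t : Fin r, ∀ H : Finset (Fin ℓ), IsHyperedge C H →
      (∀ s : Fin r, s < t → Disjoint H (Hs s)) → score C H ≤ score C (Hs t))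
    (hmaximal : ¬ ∃ H : Finset (Fin ℓ), IsHyperedge C H ∧ ∀ t : Fin r, Disjoint H (Hs t))
    (ctr : Fin r → V) (hctr : ∀ t, ctr t ∈ interC C (Hs t))
    (DJ : Finset (V × V))
    (hDJ : DJ = Finset.univ.biUnion
      (fun t : Fin r => ((unionC C (Hs t)).erase (ctr t)).image (fun x => (ctr t, x))))
    (Dstar : Finset (V × V))
    (hDsat : ∀ i, DiStarProp Dstar (C i)) :
    (DJ.card : ℝ) ≤
      (((k : ℝ) - 1) / k) * (∑ i : Fin ℓ, ((C i).card - 1 : ℝ)) +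
        (1 / (k : ℝ)) * Dstar.card := by
  have hDJ_le : (#DJ : ℤ) ≤ ∑ i, ((#(C i) : ℤ) - 1) - ∑ t, score C (Hs t) := by
    rw [hDJ]
    exact card_biUnion_starArcs_le C (fun i => (hDsat i).nonempty) (fun t => (hHs t).1)
      (fun s t => hdisj s t) hctr
  obtain ⟨T, F, hF, hFdisj, hDstar⟩ :=
    exists_disjoint_hyperedges_sum_sub_sum_score_le_card C hDsat
  have hcharge := sum_score_le_mul_sum_score_greedy C hk_ub hHs hgreedy hmaximal hF hFdisj
  rcases k.eq_zero_or_pos with rfl | hk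
  · -- no hyperedge is empty, so there are no greedy steps; the right side is `0` as `x / 0 = 0`
    have : IsEmpty (Fin r) :=
      ⟨fun t => (hHs t).1.ne_empty (card_eq_zero.1 (Nat.le_zero.1 (hk_ub _ (hHs t))))⟩
    simp [hDJ]
  have key : (k : ℝ) * #DJ ≤ (k - 1) * ∑ i, ((#(C i) : ℝ) - 1) + #Dstar := by
    have := mul_le_mul_of_nonneg_left hDJ_le (k.cast_nonneg : (0 : ℤ) ≤ k)
    exact_mod_cast (by linarith : (k : ℤ) * #DJ ≤ (k - 1) * ∑ i, ((#(C i) : ℤ) - 1) + #Dstar)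
  have hkR : (0 : ℝ) < k := mod_cast hk
  rw [div_mul_eq_mul_div, one_div_mul_eq_div, ← add_div, le_div_iff₀ hkR]
  linarith

/-- Corollary: the arc set `D_J` obtained from a greedy matching `J = {H_1, …, H_r}`
(with chosen centers `c_H ∈ ⋂_{i∈H} C_i`) satisfies
`|D_J| ≤ ((k−1)/k)·C_tot + (1/k)·|D*|`, where `D*` is a minimum-cardinality arc set
satisfying the directed-star property for every community and `k` is the maximum
hyperedge size. -/
theorem greedy_distars_bound
    {V : Type*} [Fintype V] [DecidableEq V]
    (ℓ : ℕ) (hℓ : 1 ≤ ℓ) (C : Fin ℓ → Finset V) (hC : ∀ i, (C i).Nonempty)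
    (k : ℕ)
    (hk_ub : ∀ H : Finset (Fin ℓ), IsHyperedge C H → H.card ≤ k)
    (hk_max : ∃ H : Finset (Fin ℓ), IsHyperedge C H ∧ H.card = k)
    (r : ℕ) (Hs : Fin r → Finset (Fin ℓ))
    (hHs : ∀ t, IsHyperedge C (Hs t))
    (hdisj : ∀ s t : Fin r, s ≠ t → Disjoint (Hs s) (Hs t))
    (hgreedy : ∀ t : Fin r, ∀ H : Finset (Fin ℓ), IsHyperedge C H →
      (∀ s : Fin r, s < t → Disjoint H (Hs s)) → score C H ≤ score C (Hs t))
    (hmaximal : ¬ ∃ H : Finset (Fin ℓ), IsHyperedge C H ∧ ∀ t : Fin r, Disjoint H (Hs t))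
    (ctr : Fin r → V) (hctr : ∀ t, ctr t ∈ interC C (Hs t))
    (DJ : Finset (V × V))
    (hDJ : DJ = Finset.univ.biUnion
      (fun t : Fin r => ((unionC C (Hs t)).erase (ctr t)).image (fun x => (ctr t, x))))
    (Dstar : Finset (V × V)) (hDarc : ∀ p ∈ Dstar, p.1 ≠ p.2)
    (hDsat : ∀ i, DiStarProp Dstar (C i))
    (hDmin : ∀ A : Finset (V × V), (∀ p ∈ A, p.1 ≠ p.2) →
      (∀ i, DiStarProp A (C i)) → Dstar.card ≤ A.card) :
    (DJ.card : ℝ) ≤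
      (((k : ℝ) - 1) / k) * (∑ i : Fin ℓ, ((C i).card - 1 : ℝ)) +
        (1 / (k : ℝ)) * Dstar.card :=
  greedy_distars_bound_general ℓ C k hk_ub r Hs hHs hdisj hgreedy hmaximal ctr hctr DJ hDJ Dstar
    hDsat
end

section
/- Let (C_1, …, C_ℓ) be a finite indexed family of nonempty subsets of V with ℓ ≥ 1, let k = max{|H| : H is a hyperedge}, and let J be a greedy matching with chosen centers c_H ∈ ⋂_{i∈H} C_i and D_J = ⋃_{H∈J} {(c_H→x) : x ∈ ⋃_{i∈H} C_i, x ≠ c_H}. Let E be the edge set obtained from D_J by replacing each arc (x→y) by the unordered pair {x, y} and removing duplicates, and let E* be an edge set on V of minimum cardinality satisfying the star-containment property for every community C_i. Then |E| ≤ ((k−1)/k)·C_tot + (2/k)·|E*|. -/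
open scoped Classical

/-- An edge set `E` satisfies the star-containment property for `S` if some `c ∈ S`
is joined by an edge of `E` to every other element of `S`. -/
def StarProp {V : Type*} (E : Finset (Sym2 V)) (S : Finset V) : Prop :=
  ∃ c ∈ S, ∀ x ∈ S, x ≠ c → s(c, x) ∈ E


lemma score_formula {V : Type*} [Fintype V] [DecidableEq V] {ℓ : ℕ}
    (C : Fin ℓ → Finset V) (H : Finset (Fin ℓ)) :
    score C H = 1 + (∑ i ∈ H, ((C i).card - 1 : ℤ)) - ((unionC C H).card : ℤ) := by
  classical
  have hswap : ∑ v ∈ unionC C H, ((H.filter (fun i => v ∈ C i)).card : ℤ)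
      = ∑ i ∈ H, ((C i).card : ℤ) := by
    have h1 : ∀ v : V, ((H.filter (fun i => v ∈ C i)).card : ℤ)
        = ∑ i ∈ H, if v ∈ C i then (1:ℤ) else 0 := by
      intro v
      rw [Finset.card_filter]
      push_cast
      rfl
    calc ∑ v ∈ unionC C H, ((H.filter (fun i => v ∈ C i)).card : ℤ)
        = ∑ v ∈ unionC C H, ∑ i ∈ H, if v ∈ C i then (1:ℤ) else 0 :=
          Finset.sum_congr rfl fun v _ => h1 v
      _ = ∑ i ∈ H, ∑ v ∈ unionC C H, if v ∈ C i then (1:ℤ) else 0 := Finset.sum_comm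
      _ = ∑ i ∈ H, ((C i).card : ℤ) := by
          refine Finset.sum_congr rfl fun i hi => ?_
          rw [Finset.sum_ite_mem]
          simp only [unionC]
          rw [Finset.inter_eq_right.mpr (Finset.subset_biUnion_of_mem C hi)]
          simp
  unfold score
  rw [Finset.sum_sub_distrib, hswap, Finset.sum_sub_distrib, Finset.sum_const,
    Finset.sum_const]
  push_cast
  ring

lemma score_singleton {V : Type*} [Fintype V] [DecidableEq V] {ℓ : ℕ}
    (C : Fin ℓ → Finset V) (i : Fin ℓ) : score C {i} = 0 := by
  rw [score_formula]
  simp [unionC]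

lemma hyperedge_singleton {V : Type*} [Fintype V] [DecidableEq V] {ℓ : ℕ}
    (C : Fin ℓ → Finset V) (i : Fin ℓ) (h : (C i).Nonempty) :
    IsHyperedge C {i} := by
  refine ⟨Finset.singleton_nonempty i, ?_⟩
  obtain ⟨v, hv⟩ := h
  exact ⟨v, by simp [interC, hv]⟩

/-- The `DS2S` guarantee: the undirected edge set `E` obtained from the arc set
`D_J` of a greedy matching (each arc `(x→y)` replaced by the edge `{x,y}`,
duplicates removed) satisfies `|E| ≤ ((k−1)/k)·C_tot + (2/k)·|E*|`, where `E*` is a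
minimum-cardinality edge set satisfying the star-containment property for every
community and `k` is the maximum hyperedge size. -/
theorem ds2s_bound
    {V : Type*} [Fintype V] [DecidableEq V]
    (ℓ : ℕ) (hℓ : 1 ≤ ℓ) (C : Fin ℓ → Finset V) (hC : ∀ i, (C i).Nonempty)
    (k : ℕ)
    (hk_ub : ∀ H : Finset (Fin ℓ), IsHyperedge C H → H.card ≤ k)
    (hk_max : ∃ H : Finset (Fin ℓ), IsHyperedge C H ∧ H.card = k)
    (r : ℕ) (Hs : Fin r → Finset (Fin ℓ))
    (hHs : ∀ t, IsHyperedge C (Hs t))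
    (hdisj : ∀ s t : Fin r, s ≠ t → Disjoint (Hs s) (Hs t))
    (hgreedy : ∀ t : Fin r, ∀ H : Finset (Fin ℓ), IsHyperedge C H →
      (∀ s : Fin r, s < t → Disjoint H (Hs s)) → score C H ≤ score C (Hs t))
    (hmaximal : ¬ ∃ H : Finset (Fin ℓ), IsHyperedge C H ∧ ∀ t : Fin r, Disjoint H (Hs t))
    (ctr : Fin r → V) (hctr : ∀ t, ctr t ∈ interC C (Hs t))
    (DJ : Finset (V × V))
    (hDJ : DJ = Finset.univ.biUnion
      (fun t : Fin r => ((unionC C (Hs t)).erase (ctr t)).image (fun x => (ctr t, x))))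
    (E : Finset (Sym2 V)) (hE : E = DJ.image (fun p => s(p.1, p.2)))
    (Estar : Finset (Sym2 V)) (hEdiag : ∀ e ∈ Estar, ¬ e.IsDiag)
    (hEsat : ∀ i, StarProp Estar (C i))
    (hEmin : ∀ F : Finset (Sym2 V), (∀ e ∈ F, ¬ e.IsDiag) →
      (∀ i, StarProp F (C i)) → Estar.card ≤ F.card) :
    (E.card : ℝ) ≤
      (((k : ℝ) - 1) / k) * (∑ i : Fin ℓ, ((C i).card - 1 : ℝ)) +
        (2 / (k : ℝ)) * Estar.card := by
  classical
  obtain ⟨Hk, hHk, hHkcard⟩ := hk_max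
  have kpos : 1 ≤ k := hHkcard ▸ Finset.card_pos.mpr hHk.1
  -- every index is covered by the greedy matching
  have hcover : ∀ i : Fin ℓ, ∃ t : Fin r, i ∈ Hs t := by
    intro i
    by_contra hno
    push_neg at hno
    exact hmaximal ⟨{i}, hyperedge_singleton C i (hC i),
      fun t => Finset.disjoint_singleton_left.mpr (hno t)⟩
  have hrne : Nonempty (Fin r) := ⟨(hcover ⟨0, hℓ⟩).choose⟩
  have hinh : Inhabited (Fin r) := Classical.inhabited_of_nonempty hrne
  set tOf : Fin ℓ → Fin r := fun i => (hcover i).choose with htOf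
  have htOfmem : ∀ i, i ∈ Hs (tOf i) := fun i => (hcover i).choose_spec
  have hfiber : ∀ t, Hs t = Finset.univ.filter (fun i => tOf i = t) := by
    intro t
    ext i
    simp only [Finset.mem_filter, Finset.mem_univ, true_and]
    constructor
    · intro hi
      by_contra hne
      exact Finset.disjoint_left.mp (hdisj _ _ hne) (htOfmem i) hi
    · intro h; exact h ▸ htOfmem i
  -- nonnegativity of greedy scores
  have hS0 : ∀ t, 0 ≤ score C (Hs t) := by
    intro t
    obtain ⟨i, hi⟩ := (hHs t).1
    have := hgreedy t {i} (hyperedge_singleton C i (hC i)) (fun s hs => by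
      refine Finset.disjoint_singleton_left.mpr ?_
      intro hmem
      exact Finset.disjoint_left.mp (hdisj s t (ne_of_lt hs)) hmem hi)
    rwa [score_singleton] at this
  set S : ℤ := ∑ t : Fin r, score C (Hs t) with hSdef
  set A : ℤ := ∑ i : Fin ℓ, ((C i).card - 1 : ℤ) with hAdef
  -- C_tot splits along the greedy matching
  have hA1 : A = ∑ t : Fin r, ∑ i ∈ Hs t, ((C i).card - 1 : ℤ) := by
    rw [hAdef]
    rw [← Finset.sum_fiberwise_of_maps_to (fun i _ => Finset.mem_univ (tOf i))
      (fun i => ((C i).card - 1 : ℤ))]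
    exact Finset.sum_congr rfl fun t _ => by rw [← hfiber t]
  -- |E| ≤ Σ_t (|U_t| - 1)
  have hctrU : ∀ t, ctr t ∈ unionC C (Hs t) := by
    intro t
    obtain ⟨i, hi⟩ := (hHs t).1
    have := hctr t
    simp only [interC, Finset.mem_filter] at this
    exact Finset.mem_biUnion.mpr ⟨i, hi, this.2 i hi⟩
  have hEcard : (E.card : ℤ) ≤ ∑ t : Fin r, ((unionC C (Hs t)).card - 1 : ℤ) := by
    calc (E.card : ℤ) ≤ (DJ.card : ℤ) := by
          exact_mod_cast hE ▸ Finset.card_image_le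
      _ ≤ ∑ t : Fin r,
          ((((unionC C (Hs t)).erase (ctr t)).image (fun x => (ctr t, x))).card : ℤ) := by
          rw [hDJ]; exact_mod_cast Finset.card_biUnion_le
      _ ≤ ∑ t : Fin r, ((unionC C (Hs t)).card - 1 : ℤ) := by
          refine Finset.sum_le_sum fun t _ => ?_
          calc ((((unionC C (Hs t)).erase (ctr t)).image (fun x => (ctr t, x))).card : ℤ)
              ≤ (((unionC C (Hs t)).erase (ctr t)).card : ℤ) := by
                exact_mod_cast Finset.card_image_le
            _ = ((unionC C (Hs t)).card - 1 : ℤ) := by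
                rw [Finset.card_erase_of_mem (hctrU t)]
                have : 1 ≤ (unionC C (Hs t)).card :=
                  Finset.card_pos.mpr ⟨ctr t, hctrU t⟩
                push_cast [this]
                ring
  have hE1 : (E.card : ℤ) ≤ A - S := by
    refine hEcard.trans (le_of_eq ?_)
    rw [hA1, hSdef, ← Finset.sum_sub_distrib]
    refine Finset.sum_congr rfl fun t _ => ?_
    rw [score_formula]
    ring
  -- star centers of Estar
  choose cstar hc1 hc2 using hEsat
  set centers : Finset V := Finset.univ.image cstar with hcenters
  set Gv : V → Finset (Fin ℓ) := fun v => Finset.univ.filter (fun i => cstar i = v)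
    with hGv
  have hGvmem : ∀ i : Fin ℓ, i ∈ Gv (cstar i) := fun i => by simp [hGv]
  have hGvc : ∀ v, ∀ i ∈ Gv v, cstar i = v := by
    intro v i hi
    simpa [hGv] using hi
  have hvGv : ∀ v ∈ centers, ∀ i ∈ Gv v, v ∈ C i := by
    intro v hv i hi
    exact (hGvc v i hi) ▸ hc1 i
  have hGvhyper : ∀ v ∈ centers, IsHyperedge C (Gv v) := by
    intro v hv
    obtain ⟨i, _, hi⟩ := Finset.mem_image.mp hv
    refine ⟨⟨i, hi ▸ hGvmem i⟩, ⟨v, ?_⟩⟩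
    simp only [interC, Finset.mem_filter, Finset.mem_univ, true_and]
    exact fun j hj => hvGv v hv j hj
  -- C_tot splits along the star fibers
  have hA2 : A = ∑ v ∈ centers, ∑ i ∈ Gv v, ((C i).card - 1 : ℤ) := by
    rw [hAdef]
    exact (Finset.sum_fiberwise_of_maps_to
      (fun i _ => Finset.mem_image_of_mem cstar (Finset.mem_univ i)) _).symm
  -- charging the star hyperedges to the greedy matching
  have hminex : ∀ v ∈ centers, ∃ t : Fin r, ¬ Disjoint (Gv v) (Hs t) ∧
      ∀ s : Fin r, s < t → Disjoint (Gv v) (Hs s) := by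
    intro v hv
    obtain ⟨i, _, hi⟩ := Finset.mem_image.mp hv
    have hne : (Finset.univ.filter (fun t => ¬ Disjoint (Gv v) (Hs t))).Nonempty := by
      refine ⟨tOf i, ?_⟩
      simp only [Finset.mem_filter, Finset.mem_univ, true_and]
      exact Finset.not_disjoint_iff.mpr ⟨i, hi ▸ hGvmem i, htOfmem i⟩
    set T := Finset.univ.filter (fun t => ¬ Disjoint (Gv v) (Hs t))
    refine ⟨T.min' hne, ?_, ?_⟩
    · have := T.min'_mem hne
      simpa [T] using this
    · intro s hs
      by_contra hnd
      have : T.min' hne ≤ s := T.min'_le s (by simpa [T] using hnd)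
      exact absurd (lt_of_lt_of_le hs this) (lt_irrefl _)
  choose! f hf1 hf2 using hminex
  have hscorev : ∀ v ∈ centers, score C (Gv v) ≤ score C (Hs (f v)) := by
    intro v hv
    exact hgreedy (f v) (Gv v) (hGvhyper v hv) (hf2 v hv)
  have hℓinh : Inhabited (Fin ℓ) := ⟨⟨0, hℓ⟩⟩
  have hfibcard : ∀ t : Fin r, (centers.filter (fun v => f v = t)).card ≤ k := by
    intro t
    have hwit : ∀ v, v ∈ centers.filter (fun v => f v = t) →
        ∃ i, i ∈ Gv v ∧ i ∈ Hs t := by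
      intro v hv
      rw [Finset.mem_filter] at hv
      have := hf1 v hv.1
      rw [hv.2] at this
      exact Finset.not_disjoint_iff.mp this
    choose! g hg1 hg2 using hwit
    have hcard : (centers.filter (fun v => f v = t)).card ≤ (Hs t).card := by
      refine Finset.card_le_card_of_injOn g (fun v hv => hg2 v hv) ?_
      intro v₁ h₁ v₂ h₂ heq
      rw [← hGvc v₁ _ (hg1 v₁ h₁), ← hGvc v₂ _ (hg1 v₂ h₂), heq]
    exact hcard.trans (hk_ub (Hs t) (hHs t))
  have hcharge : ∑ v ∈ centers, score C (Gv v) ≤ (k : ℤ) * S := by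
    calc ∑ v ∈ centers, score C (Gv v)
        ≤ ∑ v ∈ centers, score C (Hs (f v)) :=
          Finset.sum_le_sum hscorev
      _ = ∑ t : Fin r, ∑ v ∈ centers.filter (fun v => f v = t), score C (Hs (f v)) :=
          (Finset.sum_fiberwise_of_maps_to (fun v _ => Finset.mem_univ (f v)) _).symm
      _ ≤ ∑ t : Fin r, (k : ℤ) * score C (Hs t) := by
          refine Finset.sum_le_sum fun t _ => ?_
          have : ∑ v ∈ centers.filter (fun v => f v = t), score C (Hs (f v))
              = ((centers.filter (fun v => f v = t)).card : ℤ) * score C (Hs t) := by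
            rw [Finset.sum_congr rfl
              (fun v hv => by rw [(Finset.mem_filter.mp hv).2]),
              Finset.sum_const, nsmul_eq_mul]
          rw [this]
          exact mul_le_mul_of_nonneg_right (by exact_mod_cast hfibcard t) (hS0 t)
      _ = (k : ℤ) * S := by rw [hSdef, Finset.mul_sum]
  -- double counting star edges
  have hvU : ∀ v ∈ centers, v ∈ unionC C (Gv v) := by
    intro v hv
    obtain ⟨i, _, hi⟩ := Finset.mem_image.mp hv
    exact Finset.mem_biUnion.mpr ⟨i, hi ▸ hGvmem i, hvGv v hv i (hi ▸ hGvmem i)⟩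
  set Fv : V → Finset (Sym2 V) :=
    fun v => ((unionC C (Gv v)).erase v).image (fun x => s(v, x)) with hFv
  have hFvcard : ∀ v ∈ centers, (Fv v).card = (unionC C (Gv v)).card - 1 := by
    intro v hv
    rw [hFv]
    rw [Finset.card_image_of_injOn (fun x _ y _ hxy => Sym2.congr_right.mp hxy),
      Finset.card_erase_of_mem (hvU v hv)]
  have hFvsub : ∀ v ∈ centers, Fv v ⊆ Estar := by
    intro v hv e he
    simp only [hFv, Finset.mem_image, Finset.mem_erase] at he
    obtain ⟨x, ⟨hxne, hxU⟩, rfl⟩ := he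
    obtain ⟨i, hiG, hxC⟩ := Finset.mem_biUnion.mp hxU
    have := hc2 i x hxC (by rw [hGvc v i hiG]; exact hxne)
    rwa [hGvc v i hiG] at this
  have hdc : ∑ v ∈ centers, (Fv v).card ≤ 2 * Estar.card := by
    have h1 : ∑ v ∈ centers, (Fv v).card
        = ∑ v ∈ centers, (Estar.filter (fun e => e ∈ Fv v)).card := by
      refine Finset.sum_congr rfl fun v hv => ?_
      congr 1
      rw [Finset.filter_mem_eq_inter, Finset.inter_eq_right.mpr (hFvsub v hv)]
    rw [h1]
    simp_rw [Finset.card_filter]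
    rw [Finset.sum_comm]
    have h2 : ∀ e ∈ Estar,
        (∑ v ∈ centers, if e ∈ Fv v then 1 else 0) ≤ 2 := by
      intro e he
      rw [← Finset.card_filter]
      induction e using Sym2.ind with
      | _ a b =>
        refine le_trans (Finset.card_le_card (fun v hv => ?_))
          ((Finset.card_insert_le a {b}).trans (by simp))
        rw [Finset.mem_filter] at hv
        obtain ⟨x, -, hx⟩ := Finset.mem_image.mp hv.2
        have hve : v ∈ s(a, b) := hx ▸ Sym2.mem_mk_left v x
        have := Sym2.mem_iff.mp hve
        simp only [Finset.mem_insert, Finset.mem_singleton]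
        exact this
    calc ∑ e ∈ Estar, ∑ v ∈ centers, (if e ∈ Fv v then 1 else 0)
        ≤ ∑ _e ∈ Estar, 2 := Finset.sum_le_sum h2
      _ = 2 * Estar.card := by rw [Finset.sum_const]; ring
  have hstar : ∑ v ∈ centers, ((unionC C (Gv v)).card - 1 : ℤ)
      ≤ 2 * (Estar.card : ℤ) := by
    have heq : ∑ v ∈ centers, ((unionC C (Gv v)).card - 1 : ℤ)
        = ∑ v ∈ centers, ((Fv v).card : ℤ) := by
      refine Finset.sum_congr rfl fun v hv => ?_
      have h1 : 1 ≤ (unionC C (Gv v)).card := Finset.card_pos.mpr ⟨v, hvU v hv⟩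
      rw [hFvcard v hv, Nat.cast_sub h1, Nat.cast_one]
    rw [heq]
    exact_mod_cast hdc
  -- combine
  have hA3 : A ≤ (k : ℤ) * S + 2 * Estar.card := by
    calc A = ∑ v ∈ centers, ∑ i ∈ Gv v, ((C i).card - 1 : ℤ) := hA2
      _ = ∑ v ∈ centers, (score C (Gv v) + ((unionC C (Gv v)).card - 1 : ℤ)) := by
          refine Finset.sum_congr rfl fun v hv => ?_
          rw [score_formula]; ring
      _ = (∑ v ∈ centers, score C (Gv v)) +
            ∑ v ∈ centers, ((unionC C (Gv v)).card - 1 : ℤ) := Finset.sum_add_distrib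
      _ ≤ (k : ℤ) * S + 2 * Estar.card := add_le_add hcharge hstar
  -- final arithmetic
  have hk0 : (0 : ℝ) < (k : ℝ) := by
    have : 0 < k := kpos
    exact_mod_cast this
  have hAr : (∑ i : Fin ℓ, ((C i).card - 1 : ℝ)) = (A : ℝ) := by
    rw [hAdef]
    push_cast
    ring
  rw [hAr, div_mul_eq_mul_div, div_mul_eq_mul_div, ← add_div, le_div_iff₀ hk0]
  have key : (E.card : ℤ) * k ≤ ((k : ℤ) - 1) * A + 2 * Estar.card := by
    have h1 : (E.card : ℤ) * k ≤ (A - S) * k :=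
      mul_le_mul_of_nonneg_right hE1 (by positivity)
    nlinarith [hA3]
  exact_mod_cast key
end

section
/- Let U be a finite set, let C_1, …, C_m be nonempty subsets of U, let s ∉ U, and set V = U ∪ {s}. If F is a finite set of unordered pairs of distinct elements of V such that for every i at least one pair of F has both endpoints in {s} ∪ C_i, then there exists a set F' of unordered pairs, each of the form {s, x} with x ∈ U, such that |F'| ≤ |F| and for every i at least one pair of F' has both endpoints in {s} ∪ C_i. -/
open scoped Classical

/-- The edge-swapping argument in the NP-hardness reduction for `SparseDens`:
if a set `F` of edges (unordered pairs of distinct elements of `V = U ∪ {s}`)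
covers every community `{s} ∪ C_i` with at least one edge, then there is a set `F'`
of edges, all incident to `s` (of the form `{s, x}` with `x ∈ U`), with
`|F'| ≤ |F|`, still covering every community with at least one edge. -/
theorem sparsedens_edge_swap
    {W : Type*} [Fintype W] [DecidableEq W]
    (U : Finset W) (v₀ : W) (hv₀ : v₀ ∉ U)
    (m : ℕ) (C : Fin m → Finset W)
    (hCsub : ∀ i, C i ⊆ U) (hCne : ∀ i, (C i).Nonempty)
    (F : Finset (Sym2 W))
    (hFdiag : ∀ e ∈ F, ¬ e.IsDiag)
    (hFV : ∀ e ∈ F, ∀ v ∈ e, v ∈ insert v₀ U)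
    (hFcov : ∀ i, ∃ e ∈ F, ∀ v ∈ e, v ∈ insert v₀ (C i)) :
    ∃ F' : Finset (Sym2 W),
      (∀ e ∈ F', ∃ x ∈ U, e = s(v₀, x)) ∧
      F'.card ≤ F.card ∧
      (∀ i, ∃ e ∈ F', ∀ v ∈ e, v ∈ insert v₀ (C i)) := by

  classical
  -- pick for each edge an endpoint different from v₀
  have hpick : ∀ e ∈ F, ∃ x, x ∈ e ∧ x ≠ v₀ := by
    intro e he
    induction e using Sym2.ind with
    | _ a b =>
      have hd := hFdiag _ he
      rw [Sym2.isDiag_iff_proj_eq] at hd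
      by_cases ha : a = v₀
      · exact ⟨b, Sym2.mem_mk_right a b, fun hb => hd (ha.trans hb.symm)⟩
      · exact ⟨a, Sym2.mem_mk_left a b, ha⟩
  set g : Sym2 W → W := fun e => if h : ∃ x, x ∈ e ∧ x ≠ v₀ then h.choose else v₀ with hg
  have hgmem : ∀ e ∈ F, g e ∈ e ∧ g e ≠ v₀ := by
    intro e he
    have h := hpick e he
    simp only [hg, dif_pos h]
    exact h.choose_spec
  refine ⟨F.image (fun e => s(v₀, g e)), ?_, Finset.card_image_le, ?_⟩
  · intro e he
    obtain ⟨a, ha, rfl⟩ := Finset.mem_image.mp he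
    refine ⟨g a, ?_, rfl⟩
    have := hFV a ha _ (hgmem a ha).1
    rcases Finset.mem_insert.mp this with h | h
    · exact absurd h (hgmem a ha).2
    · exact h
  · intro i
    obtain ⟨e, he, hcov⟩ := hFcov i
    refine ⟨s(v₀, g e), Finset.mem_image_of_mem _ he, ?_⟩
    intro v hv
    rcases Sym2.mem_iff.mp hv with rfl | rfl
    · exact Finset.mem_insert_self _ _
    · exact hcov _ (hgmem e he).1
end

section
/- Let U be a finite set, let C_1, …, C_m be nonempty subsets of U, let s ∉ U, set V = U ∪ {s}, and let c be a positive integer. Then there exists a hitting set X ⊆ U with |X| ≤ c and X ∩ C_i ≠ ∅ for every i, if and only if there exists a set F of unordered pairs of distinct elements of V with |F| ≤ c such that for every i at least one pair of F has both endpoints in {s} ∪ C_i. -/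
open scoped Classical

/-- Correctness of the reduction from `HittingSet` used in the NP-hardness proof for
`SparseDens`: there is a hitting set `X ⊆ U` with `|X| ≤ c` meeting every `C_i`
if and only if there is a set `F` of at most `c` edges (unordered pairs of distinct
elements of `V = U ∪ {s}`) such that every community `{s} ∪ C_i` contains at least
one edge of `F`. -/
theorem sparsedens_reduction_correct
    {W : Type*} [Fintype W] [DecidableEq W]
    (U : Finset W) (v₀ : W) (hv₀ : v₀ ∉ U)
    (m : ℕ) (C : Fin m → Finset W)
    (hCsub : ∀ i, C i ⊆ U) (hCne : ∀ i, (C i).Nonempty)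
    (c : ℕ) (hc : 0 < c) :
    (∃ X : Finset W, X ⊆ U ∧ X.card ≤ c ∧ ∀ i, (X ∩ C i).Nonempty) ↔
    (∃ F : Finset (Sym2 W),
      (∀ e ∈ F, ¬ e.IsDiag) ∧
      (∀ e ∈ F, ∀ v ∈ e, v ∈ insert v₀ U) ∧
      F.card ≤ c ∧
      (∀ i, ∃ e ∈ F, ∀ v ∈ e, v ∈ insert v₀ (C i))) := by
  constructor
  · rintro ⟨X, hXU, hXc, hXhit⟩
    refine ⟨X.image (fun x => s(v₀, x)), ?_, ?_, ?_, ?_⟩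
    · intro e he
      simp only [Finset.mem_image] at he
      obtain ⟨x, hx, rfl⟩ := he
      simp only [Sym2.isDiag_iff_proj_eq]
      exact fun h => hv₀ (h ▸ hXU hx)
    · intro e he v hv
      simp only [Finset.mem_image] at he
      obtain ⟨x, hx, rfl⟩ := he
      rcases Sym2.mem_iff.mp hv with rfl | rfl
      · exact Finset.mem_insert_self _ _
      · exact Finset.mem_insert_of_mem (hXU hx)
    · exact le_trans Finset.card_image_le hXc
    · intro i
      obtain ⟨x, hx⟩ := hXhit i
      rw [Finset.mem_inter] at hx
      refine ⟨s(v₀, x), Finset.mem_image_of_mem _ hx.1, ?_⟩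
      intro v hv
      rcases Sym2.mem_iff.mp hv with rfl | rfl
      · exact Finset.mem_insert_self _ _
      · exact Finset.mem_insert_of_mem hx.2
  · rintro ⟨F, hdiag, hsub, hFc, hhit⟩
    have key : ∀ e ∈ F, ∃ v ∈ e, v ≠ v₀ := by
      intro e he
      induction e using Sym2.inductionOn with
      | hf a b =>
        have hab : a ≠ b := by simpa [Sym2.isDiag_iff_proj_eq] using hdiag _ he
        by_cases ha : a = v₀
        · exact ⟨b, Sym2.mem_mk_right _ _, fun h => hab (ha.trans h.symm)⟩
        · exact ⟨a, Sym2.mem_mk_left _ _, ha⟩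
    set f : Sym2 W → W := fun e => if h : ∃ v ∈ e, v ≠ v₀ then h.choose else v₀ with hf
    have hfmem : ∀ e ∈ F, f e ∈ e ∧ f e ≠ v₀ := by
      intro e he
      have h := key e he
      simp only [hf, dif_pos h]
      exact ⟨h.choose_spec.1, h.choose_spec.2⟩
    refine ⟨F.image f, ?_, le_trans Finset.card_image_le hFc, ?_⟩
    · intro x hx
      simp only [Finset.mem_image] at hx
      obtain ⟨e, he, rfl⟩ := hx
      obtain ⟨h1, h2⟩ := hfmem e he
      rcases Finset.mem_insert.mp (hsub e he _ h1) with h | h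
      · exact absurd h h2
      · exact h
    · intro i
      obtain ⟨e, he, hein⟩ := hhit i
      obtain ⟨h1, h2⟩ := hfmem e he
      refine ⟨f e, Finset.mem_inter.mpr ⟨Finset.mem_image_of_mem _ he, ?_⟩⟩
      rcases Finset.mem_insert.mp (hein _ h1) with h | h
      · exact absurd h h2
      · exact h
end
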